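/- arXiv:1101.0440 — 8 statements merged into one kernel-verified Lean document; each statement's English description precedes it below -/
import Mathlib

section
/- Let Γ be a k-regular graph in which every vertex pair of adjacent vertices has exactly a₁ common neighbors, and suppose Γ contains a 4-claw (an induced subgraph on 5 vertices consisting of one vertex adjacent to 4 pairwise non-adjacent vertices), and every pair of vertices at distance 2 has exactly c₂ common neighbors. Then c₂ ≥ (4a₁ + 10 − k)/6. -/
open SimpleGraph Finset

lemma dist_two_aux {V : Type*} (G : SimpleGraph V) {x y z : V}
    (hxy : G.Adj x y) (hxz : G.Adj x z) (hne : y ≠ z) (hnadj : ¬ G.Adj y z) :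
    G.dist y z = 2 := by
  have hle : G.dist y z ≤ 2 := by
    have := G.dist_le (SimpleGraph.Walk.cons hxy.symm (SimpleGraph.Walk.cons hxz SimpleGraph.Walk.nil))
    simpa using this
  have h0 : G.dist y z ≠ 0 := by
    intro h
    rcases SimpleGraph.dist_eq_zero_iff_eq_or_not_reachable.mp h with h' | h'
    · exact hne h'
    · exact h' ⟨SimpleGraph.Walk.cons hxy.symm (SimpleGraph.Walk.cons hxz SimpleGraph.Walk.nil)⟩
  have h1 : G.dist y z ≠ 1 := fun h => hnadj (SimpleGraph.dist_eq_one_iff_adj.mp h)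
  omega

lemma ie4 {V : Type*} [DecidableEq V] (A B C D : Finset V) :
    A.card + B.card + C.card + D.card ≤ (A ∪ B ∪ C ∪ D).card +
      ((A ∩ B).card + (A ∩ C).card + (A ∩ D).card + (B ∩ C).card + (B ∩ D).card + (C ∩ D).card) := by
  have h1 := Finset.card_union_add_card_inter A B
  have h2 := Finset.card_union_add_card_inter (A ∪ B) C
  have h3 := Finset.card_union_add_card_inter (A ∪ B ∪ C) D
  have h4 : ((A ∪ B) ∩ C).card ≤ (A ∩ C).card + (B ∩ C).card := by
    rw [Finset.union_inter_distrib_right]; exact Finset.card_union_le _ _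
  have h5 : ((A ∪ B ∪ C) ∩ D).card ≤ (A ∩ D).card + (B ∩ D).card + (C ∩ D).card := by
    rw [Finset.union_inter_distrib_right, Finset.union_inter_distrib_right]
    calc _ ≤ (A ∩ D ∪ B ∩ D).card + (C ∩ D).card := Finset.card_union_le _ _
      _ ≤ (A ∩ D).card + (B ∩ D).card + (C ∩ D).card := by
          exact Nat.add_le_add_right (Finset.card_union_le _ _) _
  omega

set_option maxHeartbeats 1000000 in
/-- If a `k`-regular graph in which adjacent vertices have exactly `a₁`
common neighbors and vertices at distance `2` have exactly `c₂` common neighbors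
contains a `4`-claw, then `c₂ ≥ (4a₁ + 10 − k)/6`. -/
theorem four_claw_c2_bound {V : Type*} [Fintype V] [DecidableEq V]
    (G : SimpleGraph V) [DecidableRel G.Adj] (k a₁ c₂ : ℕ)
    (hreg : G.IsRegularOfDegree k)
    (ha : ∀ x y : V, G.Adj x y →
      ((G.neighborFinset x) ∩ (G.neighborFinset y)).card = a₁)
    (hc : ∀ x y : V, G.dist x y = 2 →
      ((G.neighborFinset x) ∩ (G.neighborFinset y)).card = c₂)
    (hclaw : ∃ x y₁ y₂ y₃ y₄ : V,
      G.Adj x y₁ ∧ G.Adj x y₂ ∧ G.Adj x y₃ ∧ G.Adj x y₄ ∧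
      List.Pairwise (fun a b => a ≠ b ∧ ¬ G.Adj a b) [y₁, y₂, y₃, y₄]) :
    (c₂ : ℝ) ≥ (4 * (a₁ : ℝ) + 10 - k) / 6 := by
  obtain ⟨x, y₁, y₂, y₃, y₄, h1, h2, h3, h4, hp⟩ := hclaw
  simp only [List.pairwise_cons, List.mem_cons, List.mem_singleton, List.not_mem_nil,
    List.Pairwise.nil, and_true] at hp
  obtain ⟨hp1, hp2, hp3⟩ := hp
  have n12 := hp1 y₂ (by simp); have n13 := hp1 y₃ (by simp); have n14 := hp1 y₄ (by simp)
  have n23 := hp2 y₃ (by simp); have n24 := hp2 y₄ (by simp)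
  have n34 := hp3.1 y₄ (by simp)
  set N := G.neighborFinset x with hN
  set A₁ := N ∩ G.neighborFinset y₁
  set A₂ := N ∩ G.neighborFinset y₂
  set A₃ := N ∩ G.neighborFinset y₃
  set A₄ := N ∩ G.neighborFinset y₄
  have hA1 : A₁.card = a₁ := ha x y₁ h1
  have hA2 : A₂.card = a₁ := ha x y₂ h2
  have hA3 : A₃.card = a₁ := ha x y₃ h3
  have hA4 : A₄.card = a₁ := ha x y₄ h4
  -- pairwise intersection bounds
  have key : ∀ (u v : V), G.Adj x u → G.Adj x v → u ≠ v → ¬ G.Adj u v →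
      ((N ∩ G.neighborFinset u) ∩ (N ∩ G.neighborFinset v)).card + 1 ≤ c₂ := by
    intro u v hu hv huv hnadj
    have hd := dist_two_aux G hu hv huv hnadj
    have hsub : insert x ((N ∩ G.neighborFinset u) ∩ (N ∩ G.neighborFinset v)) ⊆
        G.neighborFinset u ∩ G.neighborFinset v := by
      intro z hz
      rcases Finset.mem_insert.mp hz with rfl | hz
      · simp [G.mem_neighborFinset, hu.symm, hv.symm]
      · simp only [Finset.mem_inter] at hz ⊢
        exact ⟨hz.1.2, hz.2.2⟩
    have hxnot : x ∉ (N ∩ G.neighborFinset u) ∩ (N ∩ G.neighborFinset v) := by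
      simp [hN, G.mem_neighborFinset]
    calc ((N ∩ G.neighborFinset u) ∩ (N ∩ G.neighborFinset v)).card + 1
        = (insert x ((N ∩ G.neighborFinset u) ∩ (N ∩ G.neighborFinset v))).card := by
          rw [Finset.card_insert_of_notMem hxnot]
      _ ≤ (G.neighborFinset u ∩ G.neighborFinset v).card := Finset.card_le_card hsub
      _ = c₂ := hc u v hd
  have c12 : (A₁ ∩ A₂).card + 1 ≤ c₂ := key y₁ y₂ h1 h2 n12.1 n12.2
  have c13 : (A₁ ∩ A₃).card + 1 ≤ c₂ := key y₁ y₃ h1 h3 n13.1 n13.2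
  have c14 : (A₁ ∩ A₄).card + 1 ≤ c₂ := key y₁ y₄ h1 h4 n14.1 n14.2
  have c23 : (A₂ ∩ A₃).card + 1 ≤ c₂ := key y₂ y₃ h2 h3 n23.1 n23.2
  have c24 : (A₂ ∩ A₄).card + 1 ≤ c₂ := key y₂ y₄ h2 h4 n24.1 n24.2
  have c34 : (A₃ ∩ A₄).card + 1 ≤ c₂ := key y₃ y₄ h3 h4 n34.1 n34.2
  -- the ys and the union fit inside N
  have hYsub : ({y₁, y₂, y₃, y₄} : Finset V) ∪ (A₁ ∪ A₂ ∪ A₃ ∪ A₄) ⊆ N := by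
    intro z hz
    rcases Finset.mem_union.mp hz with hz | hz
    · simp only [Finset.mem_insert, Finset.mem_singleton] at hz
      rcases hz with rfl | rfl | rfl | rfl <;>
        simp [hN, G.mem_neighborFinset, h1, h2, h3, h4]
    · simp only [Finset.mem_union, Finset.mem_inter, A₁, A₂, A₃, A₄] at hz
      tauto
  have hYdisj : Disjoint ({y₁, y₂, y₃, y₄} : Finset V) (A₁ ∪ A₂ ∪ A₃ ∪ A₄) := by
    rw [Finset.disjoint_left]
    intro z hz hz'
    simp only [Finset.mem_insert, Finset.mem_singleton] at hz
    simp only [Finset.mem_union, Finset.mem_inter, A₁, A₂, A₃, A₄,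
      G.mem_neighborFinset] at hz'
    have hadj : G.Adj z y₁ ∨ G.Adj z y₂ ∨ G.Adj z y₃ ∨ G.Adj z y₄ := by tauto
    have n21 : ¬ G.Adj y₂ y₁ := fun h => n12.2 h.symm
    have n31 : ¬ G.Adj y₃ y₁ := fun h => n13.2 h.symm
    have n41 : ¬ G.Adj y₄ y₁ := fun h => n14.2 h.symm
    have n32 : ¬ G.Adj y₃ y₂ := fun h => n23.2 h.symm
    have n42 : ¬ G.Adj y₄ y₂ := fun h => n24.2 h.symm
    have n43 : ¬ G.Adj y₄ y₃ := fun h => n34.2 h.symm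
    have m12 := n12.2; have m13 := n13.2; have m14 := n14.2
    have m23 := n23.2; have m24 := n24.2; have m34 := n34.2
    rcases hz with rfl | rfl | rfl | rfl <;>
      rcases hadj with h | h | h | h <;>
      first
        | exact G.irrefl h
        | exact absurd h (by assumption)
  have hYcard : ({y₁, y₂, y₃, y₄} : Finset V).card = 4 := by
    rw [Finset.card_insert_of_notMem (by simp [n12.1, n13.1, n14.1]),
      Finset.card_insert_of_notMem (by simp [n23.1, n24.1]),
      Finset.card_insert_of_notMem (by simp [n34.1]), Finset.card_singleton]
  have hNk : N.card = k := hreg x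
  have hbig : 4 + (A₁ ∪ A₂ ∪ A₃ ∪ A₄).card ≤ k := by
    have := Finset.card_le_card hYsub
    rw [Finset.card_union_of_disjoint hYdisj, hYcard, hNk] at this
    exact this
  have hie := ie4 A₁ A₂ A₃ A₄
  have hfin : 4 * a₁ + 10 ≤ k + 6 * c₂ := by omega
  have hfin' : (4 : ℝ) * a₁ + 10 ≤ k + 6 * c₂ := by exact_mod_cast hfin
  linarith
end

section
/- Let Γ be a k-regular graph with no 4-claws, in which every edge lies in exactly a₁ triangles, and k > (8/3)(a₁+1). Then for every vertex x and every edge (x,y₁), there exists a clique containing x and y₁ of size at least k − 2(a₁+1) + 1. -/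
open SimpleGraph Finset

/-- In a `k`-regular graph with no `4`-claws, every edge in exactly `a₁`
triangles and `k > (8/3)(a₁+1)`, every edge `(x, y₁)` lies in a clique of size at least
`k − 2(a₁+1) + 1`. -/
theorem edge_in_large_clique {V : Type*} [Fintype V] [DecidableEq V]
    (G : SimpleGraph V) [DecidableRel G.Adj] (k a₁ : ℕ)
    (hreg : G.IsRegularOfDegree k)
    (ha : ∀ x y : V, G.Adj x y →
      ((G.neighborFinset x) ∩ (G.neighborFinset y)).card = a₁)
    (hnoclaw : ¬ ∃ x y₁ y₂ y₃ y₄ : V,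
      G.Adj x y₁ ∧ G.Adj x y₂ ∧ G.Adj x y₃ ∧ G.Adj x y₄ ∧
      List.Pairwise (fun a b => a ≠ b ∧ ¬ G.Adj a b) [y₁, y₂, y₃, y₄])
    (hk : (k : ℝ) > 8 / 3 * ((a₁ : ℝ) + 1)) :
    ∀ x y₁ : V, G.Adj x y₁ →
      ∃ s : Finset V, G.IsClique (s : Set V) ∧ x ∈ s ∧ y₁ ∈ s ∧
        (s.card : ℤ) ≥ (k : ℤ) - 2 * ((a₁ : ℤ) + 1) + 1 := by
  intro x y₁ hxy₁
  have hk' : 2 * (a₁ + 1) < k := by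
    have h1 : (0:ℝ) ≤ (a₁:ℝ) := Nat.cast_nonneg a₁
    have h2 : ((2 * (a₁ + 1) : ℕ) : ℝ) < (k : ℝ) := by push_cast; nlinarith
    exact_mod_cast h2
  set N := G.neighborFinset x with hNdef
  have hNcard : N.card = k := hreg x
  set Y : V → Finset V := fun y => insert y (N ∩ G.neighborFinset y) with hY
  have hYsub : ∀ y, y ∈ N → Y y ⊆ N := by
    intro y hy z hz
    simp only [hY, mem_insert, mem_inter] at hz
    rcases hz with rfl | ⟨h, _⟩
    · exact hy
    · exact h
  have hYcard : ∀ y, G.Adj x y → (Y y).card = a₁ + 1 := by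
    intro y hxy
    have hy : y ∉ N ∩ G.neighborFinset y := by
      simp [mem_inter, mem_neighborFinset]
    simp only [hY]
    rw [card_insert_of_notMem hy, ha x y hxy]
  -- membership extraction
  have hnot : ∀ y z : V, z ∈ N → z ∉ Y y → z ≠ y ∧ ¬ G.Adj y z := by
    intro y z hzN hz
    simp only [hY, mem_insert, mem_inter, mem_neighborFinset, not_or, not_and] at hz
    exact ⟨hz.1, hz.2 hzN⟩
  have hy1N : y₁ ∈ N := by rw [hNdef, mem_neighborFinset]; exact hxy₁
  -- choose y₂
  obtain ⟨y₂, hy₂m⟩ : (N \ Y y₁).Nonempty := by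
    rw [← card_pos, card_sdiff_of_subset (hYsub y₁ hy1N), hNcard, hYcard y₁ hxy₁]; omega
  rw [mem_sdiff] at hy₂m
  obtain ⟨hy₂N, hy₂⟩ := hy₂m
  have hxy₂ : G.Adj x y₂ := by rwa [hNdef, mem_neighborFinset] at hy₂N
  -- choose y₃
  obtain ⟨y₃, hy₃m⟩ : (N \ (Y y₁ ∪ Y y₂)).Nonempty := by
    rw [← card_pos]
    have h1 := le_card_sdiff (Y y₁ ∪ Y y₂) N
    have h2 : (Y y₁ ∪ Y y₂).card ≤ (Y y₁).card + (Y y₂).card := card_union_le _ _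
    rw [hYcard y₁ hxy₁] at h2
    rw [hYcard y₂ hxy₂] at h2
    rw [hNcard] at h1
    omega
  rw [mem_sdiff] at hy₃m
  obtain ⟨hy₃N, hy₃⟩ := hy₃m
  have hy₃1 : y₃ ∉ Y y₁ := fun h => hy₃ (mem_union_left _ h)
  have hy₃2 : y₃ ∉ Y y₂ := fun h => hy₃ (mem_union_right _ h)
  have hxy₃ : G.Adj x y₃ := by rwa [hNdef, mem_neighborFinset] at hy₃N
  -- key facts about y₂, y₃
  have h21 := hnot y₁ y₂ hy₂N hy₂
  have h31 := hnot y₁ y₃ hy₃N hy₃1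
  have h32 := hnot y₂ y₃ hy₃N hy₃2
  -- the clique
  set T := N \ (Y y₂ ∪ Y y₃) with hT
  set S := insert x T with hS
  have hxN : x ∉ N := by simp [hNdef]
  have hxT : x ∉ T := fun h => hxN (mem_sdiff.mp h).1
  -- elements of T: in N, not in Y y₂, not in Y y₃
  have hTfacts : ∀ z ∈ T, z ∈ N ∧ (z ≠ y₂ ∧ ¬ G.Adj y₂ z) ∧ (z ≠ y₃ ∧ ¬ G.Adj y₃ z) := by
    intro z hz
    rw [hT, mem_sdiff, mem_union] at hz
    push_neg at hz
    exact ⟨hz.1, hnot y₂ z hz.1 hz.2.1, hnot y₃ z hz.1 hz.2.2⟩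
  -- clique property
  have hclique : G.IsClique (S : Set V) := by
    intro a ha' b hb' hab
    simp only [hS, coe_insert, Set.mem_insert_iff, mem_coe] at ha' hb'
    rcases ha' with rfl | haT
    · rcases hb' with rfl | hbT
      · exact absurd rfl hab
      · rw [← mem_neighborFinset]; exact (hTfacts b hbT).1
    · rcases hb' with rfl | hbT
      · have := (hTfacts a haT).1
        rw [hNdef, mem_neighborFinset] at this
        exact this.symm
      · by_contra hadj
        obtain ⟨haN, ⟨ha2, ha2'⟩, ha3, ha3'⟩ := hTfacts a haT
        obtain ⟨hbN, ⟨hb2, hb2'⟩, hb3, hb3'⟩ := hTfacts b hbT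
        apply hnoclaw
        refine ⟨x, a, b, y₂, y₃, ?_, ?_, hxy₂, hxy₃, ?_⟩
        · rwa [← mem_neighborFinset]
        · rwa [← mem_neighborFinset]
        · refine List.Pairwise.cons ?_ (List.Pairwise.cons ?_
            (List.Pairwise.cons ?_ (List.pairwise_singleton _ _)))
          · intro z hz
            simp only [List.mem_cons, List.not_mem_nil, or_false] at hz
            rcases hz with rfl | rfl | rfl
            · exact ⟨hab, hadj⟩
            · exact ⟨ha2, fun h => ha2' h.symm⟩
            · exact ⟨ha3, fun h => ha3' h.symm⟩
          · intro z hz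
            simp only [List.mem_cons, List.not_mem_nil, or_false] at hz
            rcases hz with rfl | rfl
            · exact ⟨hb2, fun h => hb2' h.symm⟩
            · exact ⟨hb3, fun h => hb3' h.symm⟩
          · intro z hz
            simp only [List.mem_cons, List.not_mem_nil, or_false] at hz
            rcases hz with rfl
            exact ⟨fun h => h32.1 h.symm, h32.2⟩
  -- membership of x and y₁
  have hy₁2 : y₁ ∉ Y y₂ := by
    simp only [hY, mem_insert, mem_inter, mem_neighborFinset, not_or, not_and]
    exact ⟨fun e => h21.1 e.symm, fun _ h' => h21.2 h'.symm⟩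
  have hy₁3 : y₁ ∉ Y y₃ := by
    simp only [hY, mem_insert, mem_inter, mem_neighborFinset, not_or, not_and]
    exact ⟨fun e => h31.1 e.symm, fun _ h' => h31.2 h'.symm⟩
  have hy₁T : y₁ ∈ T := by
    rw [hT, mem_sdiff, mem_union]
    push_neg
    exact ⟨hy1N, hy₁2, hy₁3⟩
  -- cardinality
  have hTcard : N.card - (Y y₂ ∪ Y y₃).card ≤ T.card := le_card_sdiff _ _
  have hUcard : (Y y₂ ∪ Y y₃).card ≤ 2 * (a₁ + 1) := by
    calc (Y y₂ ∪ Y y₃).card ≤ (Y y₂).card + (Y y₃).card := card_union_le _ _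
      _ = 2 * (a₁ + 1) := by rw [hYcard y₂ hxy₂, hYcard y₃ hxy₃]; ring
  have hScard : S.card = T.card + 1 := card_insert_of_notMem hxT
  refine ⟨S, hclique, mem_insert_self _ _, mem_insert_of_mem hy₁T, ?_⟩
  have : k - 2 * (a₁ + 1) ≤ T.card := by omega
  omega
end

section
/- Let Γ be a k-regular graph with no 4-claws, where every edge lies in exactly a₁ triangles and k > (8/3)(a₁+1). Define a line to be a maximal clique with at least k − 2(a₁+1) + 1 vertices. Then every edge of Γ lies in a unique line. -/
/-!
A clique containing two vertices `x, y` lies in `N[x] ∩ N[y]`, so every clique has at most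
`a₁ + 2` vertices. If `u, r` are non-adjacent neighbours of `c`, the neighbours of `c` outside
`N[u] ∪ N[r]` form a clique (two non-adjacent ones would make a claw with `u, r`), and
inclusion–exclusion in `N(c)` shows it has `k − 2(a₁+1) + |N(c) ∩ N[u] ∩ N[r]|` vertices.

Uniqueness: two lines through `xy` lie in `N[x] ∩ N[y]`, so they share at least `2k − 5a₁ − 4`
vertices. Take `u` in the first line and `w` in the second with `u ≁ w`; the clique at `c = y`
together with `y` then has at least `3k − 7a₁ − 6` and at most `a₁ + 2` vertices.

Existence: if `N[x] ∩ N[y]` is a clique it is a large one, since a greedy independent set in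
`N(x)` gives `k ≤ 3(a₁+1)`. Otherwise it suffices to find a common neighbour `c` of `x, y` with two
non-adjacent neighbours `u, r` outside `N[x] ∪ N[y]`: the clique at `c` then contains `x` and `y`.
If there is none, every common neighbour is adjacent to at most `3a₁ + 1 − k` of the `a₁` common
neighbours, and a greedy independent set of size four among them is a claw at `x`.
-/

open SimpleGraph Finset

/-- A *line* of `G` (with respect to `k`, `a₁`): a maximal clique with at least
`k − 2(a₁+1) + 1` vertices. -/
def IsLine {V : Type*} (G : SimpleGraph V) (k a₁ : ℕ) (s : Finset V) : Prop :=
  G.IsClique (s : Set V) ∧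
  (∀ t : Finset V, G.IsClique (t : Set V) → s ⊆ t → s = t) ∧
  (s.card : ℤ) ≥ (k : ℤ) - 2 * ((a₁ : ℤ) + 1) + 1

namespace SimpleGraph

variable {V : Type*} {G : SimpleGraph V}

def IsFourClawFree (G : SimpleGraph V) : Prop :=
  ¬ ∃ x y₁ y₂ y₃ y₄ : V,
    G.Adj x y₁ ∧ G.Adj x y₂ ∧ G.Adj x y₃ ∧ G.Adj x y₄ ∧
    List.Pairwise (fun a b => a ≠ b ∧ ¬ G.Adj a b) [y₁, y₂, y₃, y₄]

variable [DecidableEq V]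

theorem IsFourClawFree.card_le_three (hG : G.IsFourClawFree) {x : V} {s : Finset V}
    (hsx : ∀ v ∈ s, G.Adj x v) (hs : G.IsIndepSet (s : Set V)) : #s ≤ 3 := by
  by_contra! h
  obtain ⟨t, hts, ht⟩ := exists_subset_card_eq (show 4 ≤ #s by omega)
  obtain ⟨a, u, hau, rfl, hu⟩ := card_eq_succ.1 ht
  obtain ⟨b, c, d, hbc, hbd, hcd, rfl⟩ := card_eq_three.1 hu
  simp only [mem_insert, mem_singleton, not_or] at hau
  have hmem : ∀ v ∈ [a, b, c, d], v ∈ s := fun v hv => hts (by simpa using hv)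
  have hnodup : [a, b, c, d].Nodup := by simp [hau.1, hau.2.1, hau.2.2, hbc, hbd, hcd]
  exact hG ⟨x, a, b, c, d, hsx _ (hmem a (by simp)), hsx _ (hmem b (by simp)),
    hsx _ (hmem c (by simp)), hsx _ (hmem d (by simp)),
    hnodup.pairwise_of_forall_ne fun v hv w hw hvw => ⟨hvw, hs (hmem v hv) (hmem w hw) hvw⟩⟩

section LocallyFinite

variable [G.LocallyFinite]

theorem exists_isIndepSet_subset_card_le_mul (b : ℕ) (T : Finset V)
    (hdeg : ∀ v ∈ T, #(G.neighborFinset v ∩ T) ≤ b) :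
    ∃ I ⊆ T, G.IsIndepSet (I : Set V) ∧ #T ≤ #I * (b + 1) := by
  induction T using Finset.strongInduction with
  | H T ih =>
  rcases T.eq_empty_or_nonempty with rfl | ⟨v, hv⟩
  · exact ⟨∅, empty_subset _, by simp, by simp⟩
  set T' := T \ insert v (G.neighborFinset v)
  have hT' : T' ⊂ T := (ssubset_iff_of_subset sdiff_subset).2 ⟨v, hv, by simp⟩
  obtain ⟨I, hIT', hI, hcard⟩ := ih T' hT' fun w hw =>
    (card_le_card (inter_subset_inter_left sdiff_subset)).trans (hdeg w (sdiff_subset hw))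
  have hvI : v ∉ I := fun h => by simpa [T'] using hIT' h
  refine ⟨insert v I, insert_subset hv (hIT'.trans sdiff_subset), ?_, ?_⟩
  · rw [coe_insert]
    refine hI.insert fun w hw _ => ?_
    have hw' := hIT' hw
    simp only [T', mem_sdiff, mem_insert, mem_neighborFinset, not_or] at hw'
    exact ⟨hw'.2.2, hw'.2.2 ∘ G.adj_symm⟩
  · have hsplit : #T' + #(T ∩ insert v (G.neighborFinset v)) = #T :=
      card_sdiff_add_card_inter _ _
    have hnbhd : #(T ∩ insert v (G.neighborFinset v)) ≤ b + 1 := by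
      rw [inter_insert_of_mem hv, inter_comm]
      exact (card_insert_le _ _).trans (Nat.succ_le_succ (hdeg v hv))
    rw [card_insert_of_notMem hvI, Nat.succ_mul]
    omega

theorem IsFourClawFree.card_le_of_forall_card_inter_le (hG : G.IsFourClawFree) {x : V}
    {T : Finset V} (hT : ∀ v ∈ T, G.Adj x v) {b : ℕ}
    (hdeg : ∀ v ∈ T, #(G.neighborFinset v ∩ T) ≤ b) : #T ≤ 3 * (b + 1) := by
  obtain ⟨I, hIT, hI, hcard⟩ := exists_isIndepSet_subset_card_le_mul b T hdeg
  have := hG.card_le_three (fun v hv => hT v (hIT hv)) hI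
  nlinarith

def closedNeighborFinset (v : V) : Finset V := insert v (G.neighborFinset v)

theorem mem_closedNeighborFinset {v w : V} :
    w ∈ G.closedNeighborFinset v ↔ w = v ∨ G.Adj v w := by
  simp [closedNeighborFinset]

theorem mem_closedNeighborFinset_comm {v w : V} :
    w ∈ G.closedNeighborFinset v ↔ v ∈ G.closedNeighborFinset w := by
  simp only [mem_closedNeighborFinset, eq_comm, G.adj_comm]

theorem IsClique.subset_closedNeighborFinset {s : Finset V} (hs : G.IsClique (s : Set V))
    {v : V} (hv : v ∈ s) : s ⊆ G.closedNeighborFinset v := fun w hw => by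
  rw [mem_closedNeighborFinset]
  by_cases hvw : w = v
  · exact .inl hvw
  · exact .inr (hs hv hw (Ne.symm hvw))

theorem card_neighborFinset_inter_closedNeighborFinset {a₁ : ℕ}
    (ha : ∀ x y : V, G.Adj x y → #(G.neighborFinset x ∩ G.neighborFinset y) = a₁)
    {x y : V} (hxy : G.Adj x y) :
    #(G.neighborFinset x ∩ G.closedNeighborFinset y) = a₁ + 1 := by
  rw [closedNeighborFinset, inter_insert_of_mem (G.mem_neighborFinset _ _ |>.2 hxy),
    card_insert_of_notMem (by simp), ha x y hxy]

theorem closedNeighborFinset_inter_of_adj {x y : V} (hxy : G.Adj x y) :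
    G.closedNeighborFinset x ∩ G.closedNeighborFinset y =
      insert x (insert y (G.neighborFinset x ∩ G.neighborFinset y)) := by
  rw [closedNeighborFinset, insert_inter_of_mem (by simp [closedNeighborFinset, hxy.symm]),
    closedNeighborFinset, inter_insert_of_mem (by simp [hxy])]

theorem card_closedNeighborFinset_inter {a₁ : ℕ}
    (ha : ∀ x y : V, G.Adj x y → #(G.neighborFinset x ∩ G.neighborFinset y) = a₁)
    {x y : V} (hxy : G.Adj x y) :
    #(G.closedNeighborFinset x ∩ G.closedNeighborFinset y) = a₁ + 2 := by
  rw [closedNeighborFinset_inter_of_adj hxy, card_insert_of_notMem (by simp [hxy.ne]),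
    card_insert_of_notMem (by simp), ha x y hxy]

theorem IsClique.card_le_add_two {a₁ : ℕ}
    (ha : ∀ x y : V, G.Adj x y → #(G.neighborFinset x ∩ G.neighborFinset y) = a₁)
    {s : Finset V} (hs : G.IsClique (s : Set V)) : #s ≤ a₁ + 2 := by
  rcases le_or_gt #s 1 with h | h
  · omega
  obtain ⟨x, hx, y, hy, hxy⟩ := one_lt_card.1 h
  calc #s ≤ #(G.closedNeighborFinset x ∩ G.closedNeighborFinset y) :=
        card_le_card (subset_inter (hs.subset_closedNeighborFinset hx)
          (hs.subset_closedNeighborFinset hy))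
    _ = a₁ + 2 := card_closedNeighborFinset_inter ha (hs hx hy hxy)

theorem isClique_insert_of_subset_neighborFinset {s : Finset V} (hs : G.IsClique (s : Set V))
    {c : V} (hsc : s ⊆ G.neighborFinset c) : G.IsClique ((insert c s : Finset V) : Set V) := by
  rw [coe_insert]
  exact hs.insert fun _ hb _ => (G.mem_neighborFinset _ _).1 (hsc hb)

def neighborsAvoiding (c u r : V) : Finset V :=
  G.neighborFinset c \ (G.closedNeighborFinset u ∪ G.closedNeighborFinset r)

theorem mem_neighborsAvoiding {c u r w : V} :
    w ∈ G.neighborsAvoiding c u r ↔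
      G.Adj c w ∧ w ∉ G.closedNeighborFinset u ∧ w ∉ G.closedNeighborFinset r := by
  simp [neighborsAvoiding]

theorem neighborsAvoiding_subset (c u r : V) : G.neighborsAvoiding c u r ⊆ G.neighborFinset c :=
  sdiff_subset

theorem IsFourClawFree.isClique_neighborsAvoiding (hG : G.IsFourClawFree) {c u r : V}
    (hcu : G.Adj c u) (hcr : G.Adj c r) (hur : u ≠ r) (hnur : ¬ G.Adj u r) :
    G.IsClique (G.neighborsAvoiding c u r : Set V) := by
  intro q₁ hq₁ q₂ hq₂ hne
  by_contra hnadj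
  simp only [mem_coe, mem_neighborsAvoiding, mem_closedNeighborFinset, not_or] at hq₁ hq₂
  exact hG ⟨c, u, r, q₁, q₂, hcu, hcr, hq₁.1, hq₂.1, by
    simp only [List.pairwise_cons, List.mem_cons, List.not_mem_nil, or_false,
      forall_eq_or_imp, forall_eq, List.Pairwise.nil, IsEmpty.forall_iff, implies_true, and_true]
    exact ⟨⟨⟨hur, hnur⟩, ⟨Ne.symm hq₁.2.1.1, hq₁.2.1.2⟩, Ne.symm hq₂.2.1.1, hq₂.2.1.2⟩,
      ⟨⟨Ne.symm hq₁.2.2.1, hq₁.2.2.2⟩, Ne.symm hq₂.2.2.1, hq₂.2.2.2⟩, hne, hnadj⟩⟩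

theorem card_neighborsAvoiding_add {k a₁ : ℕ} (hreg : G.IsRegularOfDegree k)
    (ha : ∀ x y : V, G.Adj x y → #(G.neighborFinset x ∩ G.neighborFinset y) = a₁)
    {c u r : V} (hcu : G.Adj c u) (hcr : G.Adj c r) :
    #(G.neighborsAvoiding c u r) + 2 * (a₁ + 1) =
      k + #(G.neighborFinset c ∩ G.closedNeighborFinset u ∩ G.closedNeighborFinset r) := by
  have hsplit := card_sdiff_add_card_inter (G.neighborFinset c)
    (G.closedNeighborFinset u ∪ G.closedNeighborFinset r)
  rw [inter_union_distrib_left] at hsplit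
  have hunion := card_union_add_card_inter (G.neighborFinset c ∩ G.closedNeighborFinset u)
    (G.neighborFinset c ∩ G.closedNeighborFinset r)
  rw [← inter_inter_distrib_left, ← inter_assoc] at hunion
  have hu := card_neighborFinset_inter_closedNeighborFinset ha hcu
  have hr := card_neighborFinset_inter_closedNeighborFinset ha hcr
  have hc : #(G.neighborFinset c) = k := hreg c
  rw [neighborsAvoiding]
  omega

theorem IsFourClawFree.le_three_mul {k a₁ : ℕ} (hG : G.IsFourClawFree)
    (hreg : G.IsRegularOfDegree k)
    (ha : ∀ x y : V, G.Adj x y → #(G.neighborFinset x ∩ G.neighborFinset y) = a₁) (x : V) :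
    k ≤ 3 * (a₁ + 1) := by
  rw [← hreg x, ← card_neighborFinset_eq_degree]
  refine hG.card_le_of_forall_card_inter_le (x := x) (fun v hv => (G.mem_neighborFinset _ _).1 hv)
    fun v hv => (ha v x ((G.mem_neighborFinset _ _).1 hv).symm).le

theorem IsFourClawFree.exists_not_isClique_neighborsAvoiding {k a₁ : ℕ}
    (hG : G.IsFourClawFree) (hreg : G.IsRegularOfDegree k)
    (ha : ∀ x y : V, G.Adj x y → #(G.neighborFinset x ∩ G.neighborFinset y) = a₁)
    (hk : 8 * a₁ + 6 < 3 * k) {x y : V} (hxy : G.Adj x y)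
    (hS : ¬ G.IsClique
      ((G.closedNeighborFinset x ∩ G.closedNeighborFinset y : Finset V) : Set V)) :
    ∃ c ∈ G.neighborFinset x ∩ G.neighborFinset y,
      ¬ G.IsClique (G.neighborsAvoiding c x y : Set V) := by
  by_contra! h
  set Λ := G.neighborFinset x ∩ G.neighborFinset y
  have hdeg : ∀ v ∈ Λ, #(G.neighborFinset v ∩ Λ) + k ≤ 3 * a₁ + 1 := by
    intro v hv
    obtain ⟨hxv, hyv⟩ : G.Adj x v ∧ G.Adj y v := by simpa [Λ] using hv
    have hcount := card_neighborsAvoiding_add hreg ha hxv.symm hyv.symm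
    have hclique := (isClique_insert_of_subset_neighborFinset (h v hv)
      (G.neighborsAvoiding_subset v x y)).card_le_add_two ha
    rw [card_insert_of_notMem (by simp [mem_neighborsAvoiding])] at hclique
    have hsub : insert x (insert y (G.neighborFinset v ∩ Λ)) ⊆
        G.neighborFinset v ∩ G.closedNeighborFinset x ∩ G.closedNeighborFinset y := by
      intro w hw
      simp only [mem_insert, mem_inter, mem_neighborFinset, Λ] at hw
      simp only [mem_inter, mem_neighborFinset, mem_closedNeighborFinset]
      rcases hw with rfl | rfl | ⟨hvw, hxw, hyw⟩
      · exact ⟨⟨hxv.symm, .inl rfl⟩, .inr hxy.symm⟩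
      · exact ⟨⟨hyv.symm, .inr hxy⟩, .inl rfl⟩
      · exact ⟨⟨hvw, .inr hxw⟩, .inr hyw⟩
    have hsub_card := card_le_card hsub
    rw [card_insert_of_notMem (by simp [Λ, hxy.ne]), card_insert_of_notMem (by simp [Λ])]
      at hsub_card
    omega
  obtain ⟨v, hv⟩ : Λ.Nonempty := by
    rw [nonempty_iff_ne_empty]
    intro hΛ
    refine hS ?_
    rw [closedNeighborFinset_inter_of_adj hxy,
      show G.neighborFinset x ∩ G.neighborFinset y = ∅ from hΛ]
    simpa using isClique_pair.2 fun _ => hxy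
  have hΛ := hG.card_le_of_forall_card_inter_le (x := x) (T := Λ) (b := 3 * a₁ + 1 - k)
    (fun w hw => by simpa [Λ] using (mem_inter.1 hw).1) fun w hw => by
      have := hdeg w hw
      omega
  have := hdeg v hv
  rw [show #Λ = a₁ from ha x y hxy] at hΛ
  omega

theorem IsFourClawFree.exists_isClique_card_of_adj {k a₁ : ℕ}
    (hG : G.IsFourClawFree) (hreg : G.IsRegularOfDegree k)
    (ha : ∀ x y : V, G.Adj x y → #(G.neighborFinset x ∩ G.neighborFinset y) = a₁)
    (hk : 8 * a₁ + 6 < 3 * k) {x y : V} (hxy : G.Adj x y) :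
    ∃ s : Finset V, G.IsClique (s : Set V) ∧ x ∈ s ∧ y ∈ s ∧ k ≤ #s + 2 * a₁ + 1 := by
  by_cases hS :
      G.IsClique ((G.closedNeighborFinset x ∩ G.closedNeighborFinset y : Finset V) : Set V)
  · refine ⟨_, hS, ?_, ?_, ?_⟩
    · simp [closedNeighborFinset_inter_of_adj hxy]
    · simp [closedNeighborFinset_inter_of_adj hxy]
    rw [card_closedNeighborFinset_inter ha hxy]
    have := hG.le_three_mul hreg ha x
    omega
  obtain ⟨c, hc, hnc⟩ := hG.exists_not_isClique_neighborsAvoiding hreg ha hk hxy hS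
  obtain ⟨hxc, hyc⟩ : G.Adj x c ∧ G.Adj y c := by simpa using hc
  obtain ⟨u, hu, r, hr, hur, hnur⟩ :
      ∃ u ∈ G.neighborsAvoiding c x y, ∃ r ∈ G.neighborsAvoiding c x y, u ≠ r ∧ ¬ G.Adj u r := by
    simpa [IsClique, Set.Pairwise] using hnc
  rw [mem_neighborsAvoiding, mem_closedNeighborFinset_comm (v := x),
    mem_closedNeighborFinset_comm (v := y)] at hu hr
  have hQ := hG.isClique_neighborsAvoiding hu.1 hr.1 hur hnur
  refine ⟨_, isClique_insert_of_subset_neighborFinset hQ (G.neighborsAvoiding_subset c u r),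
    mem_insert_of_mem ?_, mem_insert_of_mem ?_, ?_⟩
  · exact mem_neighborsAvoiding.2 ⟨hxc.symm, hu.2.1, hr.2.1⟩
  · exact mem_neighborsAvoiding.2 ⟨hyc.symm, hu.2.2, hr.2.2⟩
  · rw [card_insert_of_notMem (by simp [mem_neighborsAvoiding])]
    have := card_neighborsAvoiding_add hreg ha hu.1 hr.1
    omega

end LocallyFinite

end SimpleGraph

section Lines

variable {V : Type*} {G : SimpleGraph V} {k a₁ : ℕ}

theorem SimpleGraph.IsClique.exists_isLine_superset [Fintype V] {s : Finset V}
    (hs : G.IsClique (s : Set V)) (hcard : k ≤ #s + 2 * a₁ + 1) :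
    ∃ t, s ⊆ t ∧ IsLine G k a₁ t := by
  obtain ⟨t, hst, hmax⟩ :=
    Finite.exists_le_maximal (p := fun t : Finset V => G.IsClique (t : Set V)) hs
  have := card_le_card hst
  exact ⟨t, hst, hmax.1, fun t' ht' htt' => le_antisymm htt' (hmax.2 ht' htt'), by omega⟩

variable [DecidableEq V]

theorem IsLine.exists_not_adj {s : Finset V} (hs : IsLine G k a₁ s) {u : V} (hu : u ∉ s) :
    ∃ w ∈ s, ¬ G.Adj u w := by
  by_contra! h
  have hclique : G.IsClique ((insert u s : Finset V) : Set V) := by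
    rw [coe_insert]
    exact hs.1.insert fun w hw _ => h w hw
  exact hu (hs.2.1 _ hclique (subset_insert u s) ▸ mem_insert_self u s)

theorem IsLine.eq_of_adj [G.LocallyFinite] (hG : G.IsFourClawFree)
    (hreg : G.IsRegularOfDegree k)
    (ha : ∀ x y : V, G.Adj x y → #(G.neighborFinset x ∩ G.neighborFinset y) = a₁)
    (hk : 8 * (a₁ + 1) < 3 * k) {s₁ s₂ : Finset V} (h₁ : IsLine G k a₁ s₁)
    (h₂ : IsLine G k a₁ s₂) {x y : V} (hxy : G.Adj x y)
    (hx₁ : x ∈ s₁) (hy₁ : y ∈ s₁) (hx₂ : x ∈ s₂) (hy₂ : y ∈ s₂) : s₁ = s₂ := by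
  by_contra hne
  obtain ⟨u, hu₁, hu₂⟩ := not_subset.1 fun h => hne (h₁.2.1 s₂ h₂.1 h)
  obtain ⟨w, hw₂, huw⟩ := h₂.exists_not_adj hu₂
  have hyu : G.Adj y u := h₁.1 hy₁ hu₁ (ne_of_mem_of_not_mem hy₂ hu₂)
  have hyw : G.Adj y w := h₂.1 hy₂ hw₂ (by rintro rfl; exact huw hyu.symm)
  have hQ := (isClique_insert_of_subset_neighborFinset
    (hG.isClique_neighborsAvoiding hyu hyw (ne_of_mem_of_not_mem hw₂ hu₂).symm huw)
    (G.neighborsAvoiding_subset y u w)).card_le_add_two ha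
  rw [card_insert_of_notMem (by simp [mem_neighborsAvoiding])] at hQ
  have hcount := card_neighborsAvoiding_add hreg ha hyu hyw
  have hinter : (s₁ ∩ s₂).erase y ⊆
      G.neighborFinset y ∩ G.closedNeighborFinset u ∩ G.closedNeighborFinset w := by
    intro v hv
    obtain ⟨hvy, hv₁, hv₂⟩ : v ≠ y ∧ v ∈ s₁ ∧ v ∈ s₂ := by simpa using hv
    exact mem_inter.2 ⟨mem_inter.2 ⟨(G.mem_neighborFinset _ _).2 (h₁.1 hy₁ hv₁ hvy.symm),
      h₁.1.subset_closedNeighborFinset hu₁ hv₁⟩,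
      h₂.1.subset_closedNeighborFinset hw₂ hv₂⟩
  have hunion : s₁ ∪ s₂ ⊆ G.closedNeighborFinset x ∩ G.closedNeighborFinset y := union_subset
    (subset_inter (h₁.1.subset_closedNeighborFinset hx₁) (h₁.1.subset_closedNeighborFinset hy₁))
    (subset_inter (h₂.1.subset_closedNeighborFinset hx₂) (h₂.1.subset_closedNeighborFinset hy₂))
  have hinter_card := card_le_card hinter
  have hunion_card := card_le_card hunion
  rw [card_erase_of_mem (mem_inter.2 ⟨hy₁, hy₂⟩)] at hinter_card
  rw [card_closedNeighborFinset_inter ha hxy] at hunion_card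
  have := card_union_add_card_inter s₁ s₂
  have := h₁.2.2
  have := h₂.2.2
  omega

end Lines

/-- In a `k`-regular graph with no `4`-claws, every edge in exactly `a₁`
triangles and `k > (8/3)(a₁+1)`, every edge lies in a unique line. -/
theorem edge_in_unique_line {V : Type*} [Fintype V] [DecidableEq V]
    (G : SimpleGraph V) [DecidableRel G.Adj] (k a₁ : ℕ)
    (hreg : G.IsRegularOfDegree k)
    (ha : ∀ x y : V, G.Adj x y →
      ((G.neighborFinset x) ∩ (G.neighborFinset y)).card = a₁)
    (hnoclaw : ¬ ∃ x y₁ y₂ y₃ y₄ : V,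
      G.Adj x y₁ ∧ G.Adj x y₂ ∧ G.Adj x y₃ ∧ G.Adj x y₄ ∧
      List.Pairwise (fun a b => a ≠ b ∧ ¬ G.Adj a b) [y₁, y₂, y₃, y₄])
    (hk : (k : ℝ) > 8 / 3 * ((a₁ : ℝ) + 1)) :
    ∀ x y : V, G.Adj x y →
      ∃! s : Finset V, IsLine G k a₁ s ∧ x ∈ s ∧ y ∈ s := by
  have hG : G.IsFourClawFree := hnoclaw
  have hk' : 8 * (a₁ + 1) < 3 * k := by
    exact_mod_cast (by linarith : (8 * (a₁ + 1) : ℝ) < 3 * k)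
  intro x y hxy
  obtain ⟨s, hs, hxs, hys, hcard⟩ := hG.exists_isClique_card_of_adj hreg ha (by omega) hxy
  obtain ⟨t, hst, ht⟩ := hs.exists_isLine_superset hcard
  exact ⟨t, ⟨ht, hst hxs, hst hys⟩, fun t' ⟨ht', hxt', hyt'⟩ =>
    ht'.eq_of_adj hG hreg ha hk' ht hxy hxt' hyt' (hst hxs) (hst hys)⟩
end

section
/- Let Γ be a k-regular graph with a₁ triangles on each edge, k > (8/3)(a₁+1), such that every edge lies in a unique line (maximal clique of size ≥ k−2(a₁+1)+1). Then every vertex lies in exactly 3 lines. -/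
open SimpleGraph Finset

/-- In a `k`-regular graph with every edge in exactly `a₁` triangles,
`k > (8/3)(a₁+1)`, in which every edge lies in a unique line, every vertex lies in
exactly `3` lines. -/
theorem vertex_in_three_lines {V : Type*} [Fintype V] [DecidableEq V]
    (G : SimpleGraph V) [DecidableRel G.Adj] (k a₁ : ℕ)
    (hreg : G.IsRegularOfDegree k)
    (ha : ∀ x y : V, G.Adj x y →
      ((G.neighborFinset x) ∩ (G.neighborFinset y)).card = a₁)
    (hk : (k : ℝ) > 8 / 3 * ((a₁ : ℝ) + 1))
    (hline : ∀ x y : V, G.Adj x y →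
      ∃! s : Finset V, IsLine G k a₁ s ∧ x ∈ s ∧ y ∈ s) :
    ∀ x : V, {s : Finset V | IsLine G k a₁ s ∧ x ∈ s}.ncard = 3 := by
  intro x
  classical
  -- `3k > 8(a₁+1)` as an integer inequality
  have hn1 : (8 : ℤ) * ((a₁ : ℤ) + 1) < 3 * k := by
    have h3 : (8 : ℝ) * ((a₁ : ℝ) + 1) < 3 * k := by linarith
    exact_mod_cast h3
  set S : Finset (Finset V) :=
    univ.filter (fun s => IsLine G k a₁ s ∧ x ∈ s) with hS
  have hmemS : ∀ s : Finset V, s ∈ S ↔ IsLine G k a₁ s ∧ x ∈ s := by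
    intro s; simp [hS]
  have hset : {s : Finset V | IsLine G k a₁ s ∧ x ∈ s} = ↑S := by
    ext s; simp [hS]
  rw [hset, Set.ncard_coe_finset]
  -- adjacency of x to the other vertices of a line through x
  have hadj : ∀ s ∈ S, ∀ y ∈ s.erase x, G.Adj x y := by
    intro s hs y hy
    rw [hmemS] at hs
    obtain ⟨⟨hcl, _, _⟩, hx⟩ := hs
    obtain ⟨hyx, hys⟩ := Finset.mem_erase.mp hy
    exact hcl (by exact_mod_cast hx) (by exact_mod_cast hys) (Ne.symm hyx)
  have hsub : ∀ s ∈ S, s.erase x ⊆ G.neighborFinset x := by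
    intro s hs y hy
    exact (SimpleGraph.mem_neighborFinset G x y).mpr (hadj s hs y hy)
  -- lower bound on pieces
  have hxmem : ∀ s ∈ S, x ∈ s := fun s hs => ((hmemS s).mp hs).2
  have hcardlow : ∀ s ∈ S, (k : ℤ) - 2 * ((a₁ : ℤ) + 1) ≤ ((s.erase x).card : ℤ) := by
    intro s hs
    have hx := hxmem s hs
    have hline' := ((hmemS s).mp hs).1.2.2
    have h1 : 1 ≤ s.card := Finset.card_pos.mpr ⟨x, hx⟩
    have : (s.erase x).card = s.card - 1 := Finset.card_erase_of_mem hx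
    have : ((s.erase x).card : ℤ) = (s.card : ℤ) - 1 := by
      rw [this]; push_cast [h1]; ring
    rw [this]; linarith
  -- `k - 2(a₁+1) ≥ 1`
  have hkn : (1 : ℤ) ≤ (k : ℤ) - 2 * ((a₁ : ℤ) + 1) := by
    have : (0 : ℤ) ≤ (a₁ : ℤ) := Int.natCast_nonneg a₁
    linarith
  -- upper bound on pieces
  have hcardup : ∀ s ∈ S, (s.erase x).card ≤ a₁ + 1 := by
    intro s hs
    have hx := hxmem s hs
    have hlow := hcardlow s hs
    have hpos : 0 < (s.erase x).card := by
      have : (1 : ℤ) ≤ ((s.erase x).card : ℤ) := le_trans hkn hlow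
      exact_mod_cast lt_of_lt_of_le zero_lt_one this
    obtain ⟨y, hy⟩ := Finset.card_pos.mp hpos
    have hxy : G.Adj x y := hadj s hs y hy
    have hclique := ((hmemS s).mp hs).1.1
    have hsub2 : (s.erase x).erase y ⊆ G.neighborFinset x ∩ G.neighborFinset y := by
      intro z hz
      obtain ⟨hzy, hz'⟩ := Finset.mem_erase.mp hz
      obtain ⟨hzx, hzs⟩ := Finset.mem_erase.mp hz'
      have hys : y ∈ s := (Finset.mem_erase.mp hy).2
      have h1 : G.Adj x z := hadj s hs z hz'
      have h2 : G.Adj y z :=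
        hclique (by exact_mod_cast hys) (by exact_mod_cast hzs) (Ne.symm hzy)
      rw [Finset.mem_inter, SimpleGraph.mem_neighborFinset, SimpleGraph.mem_neighborFinset]
      exact ⟨h1, h2⟩
    have hc : ((s.erase x).erase y).card ≤ a₁ := by
      have := Finset.card_le_card hsub2
      rwa [ha x y hxy] at this
    have : ((s.erase x).erase y).card = (s.erase x).card - 1 :=
      Finset.card_erase_of_mem hy
    omega
  -- the pieces are pairwise disjoint
  have hdisj : ∀ s ∈ S, ∀ t ∈ S, s ≠ t → Disjoint (s.erase x) (t.erase x) := by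
    intro s hs t ht hst
    by_contra hnd
    obtain ⟨y, hys, hyt⟩ := Finset.not_disjoint_iff.mp hnd
    have hxy : G.Adj x y := hadj s hs y hys
    obtain ⟨u, _, huniq⟩ := hline x y hxy
    have h1 : s = u := huniq s ⟨((hmemS s).mp hs).1, hxmem s hs, (Finset.mem_erase.mp hys).2⟩
    have h2 : t = u := huniq t ⟨((hmemS t).mp ht).1, hxmem t ht, (Finset.mem_erase.mp hyt).2⟩
    exact hst (h1.trans h2.symm)
  -- the pieces cover the neighborhood
  have hcover : G.neighborFinset x = S.biUnion (fun s => s.erase x) := by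
    ext y
    constructor
    · intro hy
      have hxy : G.Adj x y := (SimpleGraph.mem_neighborFinset G x y).mp hy
      obtain ⟨s, ⟨hl, hxs, hys⟩, _⟩ := hline x y hxy
      refine Finset.mem_biUnion.mpr ⟨s, (hmemS s).mpr ⟨hl, hxs⟩, ?_⟩
      exact Finset.mem_erase.mpr ⟨hxy.ne', hys⟩
    · intro hy
      obtain ⟨s, hs, hys⟩ := Finset.mem_biUnion.mp hy
      exact hsub s hs hys
  -- the counting identity
  have hsum : ∑ s ∈ S, (s.erase x).card = k := by
    rw [← Finset.card_biUnion hdisj, ← hcover]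
    exact hreg x
  -- upper & lower estimates
  have h1 : k ≤ S.card * (a₁ + 1) := by
    calc k = ∑ s ∈ S, (s.erase x).card := hsum.symm
    _ ≤ S.card * (a₁ + 1) := by
        simpa using Finset.sum_le_card_nsmul S (fun s => (s.erase x).card) (a₁ + 1) hcardup
  have h2 : (S.card : ℤ) * ((k : ℤ) - 2 * ((a₁ : ℤ) + 1)) ≤ (k : ℤ) := by
    have := Finset.card_nsmul_le_sum S (fun s => ((s.erase x).card : ℤ))
      ((k : ℤ) - 2 * ((a₁ : ℤ) + 1)) hcardlow
    have hsum' : ∑ s ∈ S, ((s.erase x).card : ℤ) = (k : ℤ) := by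
      exact_mod_cast congrArg (Nat.cast : ℕ → ℤ) hsum
    rw [hsum'] at this
    simpa [nsmul_eq_mul] using this
  -- conclude
  have h1' : (k : ℤ) ≤ (S.card : ℤ) * ((a₁ : ℤ) + 1) := by exact_mod_cast h1
  have hge : 3 ≤ (S.card : ℤ) := by
    by_contra h
    push_neg at h
    have hM2 : (S.card : ℤ) ≤ 2 := by omega
    have hn0 : (0 : ℤ) ≤ (a₁ : ℤ) + 1 := by positivity
    nlinarith
  have hle : (S.card : ℤ) ≤ 3 := by
    by_contra h
    push_neg at h
    have hM4 : (4 : ℤ) ≤ (S.card : ℤ) := by omega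
    have : (4 : ℤ) * ((k : ℤ) - 2 * ((a₁ : ℤ) + 1)) ≤ (S.card : ℤ) * ((k : ℤ) - 2 * ((a₁ : ℤ) + 1)) :=
      mul_le_mul_of_nonneg_right hM4 (by linarith)
    linarith
  have : (S.card : ℤ) = 3 := le_antisymm hle hge
  exact_mod_cast this
end

section
/- Let Γ be a finite graph whose edge set is partitioned by a collection 𝒞 of cliques such that every vertex lies in exactly m cliques of 𝒞, and suppose |𝒞| < |V(Γ)|. Then −m is an eigenvalue of the adjacency matrix of Γ, and moreover −m is the smallest eigenvalue. -/
/-!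
Let `B` be the vertex–clique incidence matrix. Since every edge lies in exactly one clique and
every vertex in exactly `m` cliques, `B Bᵀ = A + m I`. As `B` has fewer columns than rows,
`B Bᵀ` is singular, giving an eigenvector of `A` for `-m`; as `B Bᵀ` is positive semidefinite,
every eigenvalue `μ` of `A` satisfies `μ + m ≥ 0`.
-/

open SimpleGraph Finset Matrix

namespace Matrix

variable {V ι R : Type*} [DecidableEq V]

variable (R) in
def incidence [Zero R] [One R] (s : ι → Finset V) : Matrix V ι R :=
  of fun x i => if x ∈ s i then 1 else 0

theorem incidence_mul_transpose_apply [Fintype ι] [NonAssocSemiring R] (s : ι → Finset V)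
    (x y : V) :
    (incidence R s * (incidence R s)ᵀ) x y = #{i | x ∈ s i ∧ y ∈ s i} := by
  simp only [mul_apply, transpose_apply, incidence, of_apply, ite_zero_mul_ite_zero, mul_one,
    sum_boole]

variable [Fintype V] [Fintype ι]

theorem det_mul_transpose_eq_zero_of_card_lt [Field R] (B : Matrix V ι R)
    (hcard : Fintype.card ι < Fintype.card V) : (B * Bᵀ).det = 0 := by
  by_contra hdet
  have hrank : (B * Bᵀ).rank = Fintype.card V :=
    rank_of_isUnit _ ((isUnit_iff_isUnit_det _).mpr (isUnit_iff_ne_zero.mpr hdet))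
  have := (rank_mul_le_left B Bᵀ).trans (rank_le_card_width B)
  omega

variable {A : Matrix V V R} {B : Matrix V ι R} {c : R}

theorem exists_mulVec_eq_neg_smul_of_mul_transpose_eq [Field R] (hB : B * Bᵀ = A + c • 1)
    (hcard : Fintype.card ι < Fintype.card V) : ∃ v : V → R, v ≠ 0 ∧ A *ᵥ v = -c • v := by
  obtain ⟨v, hv0, hv⟩ :=
    exists_mulVec_eq_zero_iff.mpr (det_mul_transpose_eq_zero_of_card_lt B hcard)
  rw [hB, add_mulVec, smul_mulVec, one_mulVec] at hv
  exact ⟨v, hv0, by rw [neg_smul, eq_neg_of_add_eq_zero_left hv]⟩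

theorem neg_le_of_mulVec_eq_smul_of_mul_transpose_eq [CommRing R] [LinearOrder R]
    [IsStrictOrderedRing R] (hB : B * Bᵀ = A + c • 1) {μ : R} {v : V → R} (hv0 : v ≠ 0)
    (hv : A *ᵥ v = μ • v) : -c ≤ μ := by
  have hnonneg : 0 ≤ v ⬝ᵥ (B * Bᵀ) *ᵥ v := by
    rw [← mulVec_mulVec, dotProduct_mulVec, ← mulVec_transpose]
    exact sum_nonneg fun i _ => mul_self_nonneg _
  have hpos : 0 < v ⬝ᵥ v :=
    (sum_nonneg fun i _ => mul_self_nonneg (v i)).lt_of_ne' (dotProduct_self_eq_zero.not.mpr hv0)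
  have hquad : v ⬝ᵥ (B * Bᵀ) *ᵥ v = (μ + c) * (v ⬝ᵥ v) := by
    rw [hB, add_mulVec, smul_mulVec, one_mulVec, hv, ← add_smul, dotProduct_smul, smul_eq_mul]
  rw [hquad] at hnonneg
  linarith [nonneg_of_mul_nonneg_left hnonneg hpos]

end Matrix

theorem Set.card_filter_univ_eq_ncard {α : Type*} (s : Set α) [Fintype s] (p : α → Prop)
    [DecidablePred p] : #{a : s | p a} = {a ∈ s | p a}.ncard := by
  rw [← Nat.card_coe_set_eq, ← Fintype.card_subtype, ← Nat.card_eq_fintype_card]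
  exact Nat.card_congr (Equiv.subtypeSubtypeEquivSubtypeInter (· ∈ s) p)

namespace SimpleGraph

variable {V : Type*} [DecidableEq V] (G : SimpleGraph V) [DecidableRel G.Adj]
  (𝒞 : Set (Finset V)) [Fintype 𝒞] (m : ℕ)

theorem card_cliques_containing_pair
    (hclique : ∀ C ∈ 𝒞, G.IsClique (C : Set V))
    (hedge : ∀ x y : V, G.Adj x y → ∃! C, C ∈ 𝒞 ∧ x ∈ C ∧ y ∈ C)
    (hvert : ∀ x : V, {C ∈ 𝒞 | x ∈ C}.ncard = m) (x y : V) :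
    #{C : 𝒞 | x ∈ (C : Finset V) ∧ y ∈ (C : Finset V)} =
      if x = y then m else if G.Adj x y then 1 else 0 := by
  by_cases hxy : x = y
  · subst hxy
    simp only [and_self, if_true]
    rw [Set.card_filter_univ_eq_ncard 𝒞 (x ∈ ·), hvert]
  by_cases hadj : G.Adj x y
  · obtain ⟨C₀, ⟨hC₀, hxC₀, hyC₀⟩, huniq⟩ := hedge x y hadj
    rw [if_neg hxy, if_pos hadj, card_eq_one]
    refine ⟨⟨C₀, hC₀⟩, eq_singleton_iff_unique_mem.mpr ⟨by simp [hxC₀, hyC₀], ?_⟩⟩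
    rintro C hC
    simp only [mem_filter, mem_univ, true_and] at hC
    exact Subtype.ext (huniq C ⟨C.2, hC⟩)
  · rw [if_neg hxy, if_neg hadj, card_eq_zero, filter_eq_empty_iff]
    rintro C - ⟨hx, hy⟩
    exact hadj (hclique C C.2 hx hy hxy)

theorem cliqueIncidence_mul_transpose
    (hclique : ∀ C ∈ 𝒞, G.IsClique (C : Set V))
    (hedge : ∀ x y : V, G.Adj x y → ∃! C, C ∈ 𝒞 ∧ x ∈ C ∧ y ∈ C)
    (hvert : ∀ x : V, {C ∈ 𝒞 | x ∈ C}.ncard = m) :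
    incidence ℝ (Subtype.val : 𝒞 → Finset V) * (incidence ℝ (Subtype.val : 𝒞 → Finset V))ᵀ =
      G.adjMatrix ℝ + (m : ℝ) • 1 := by
  ext x y
  rw [incidence_mul_transpose_apply, card_cliques_containing_pair G 𝒞 m hclique hedge hvert]
  by_cases hxy : x = y <;> by_cases hadj : G.Adj x y <;> simp_all [one_apply]

end SimpleGraph

/-- If the edges of a finite graph are partitioned by a collection `𝒞` of
cliques with every vertex in exactly `m` cliques of `𝒞`, and `|𝒞| < |V|`, then `−m` is an
eigenvalue of the adjacency matrix, and it is the smallest eigenvalue. -/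
theorem neg_m_smallest_eigenvalue {V : Type*} [Fintype V] [DecidableEq V]
    (G : SimpleGraph V) [DecidableRel G.Adj] (𝒞 : Set (Finset V)) (m : ℕ)
    (hclique : ∀ C ∈ 𝒞, G.IsClique (C : Set V))
    (hedge : ∀ x y : V, G.Adj x y → ∃! C, C ∈ 𝒞 ∧ x ∈ C ∧ y ∈ C)
    (hvert : ∀ x : V, {C ∈ 𝒞 | x ∈ C}.ncard = m)
    (hcard : 𝒞.ncard < Fintype.card V) :
    (∃ v : V → ℝ, v ≠ 0 ∧ G.adjMatrix ℝ *ᵥ v = (-(m : ℝ)) • v) ∧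
    ∀ μ : ℝ, (∃ v : V → ℝ, v ≠ 0 ∧ G.adjMatrix ℝ *ᵥ v = μ • v) → -(m : ℝ) ≤ μ := by
  have : Fintype 𝒞 := Fintype.ofFinite 𝒞
  have hB := G.cliqueIncidence_mul_transpose 𝒞 m hclique hedge hvert
  have hcard' : Fintype.card 𝒞 < Fintype.card V := by
    rwa [← Nat.card_eq_fintype_card, Nat.card_coe_set_eq]
  exact ⟨exists_mulVec_eq_neg_smul_of_mul_transpose_eq hB hcard',
    fun μ ⟨v, hv0, hv⟩ => neg_le_of_mulVec_eq_smul_of_mul_transpose_eq hB hv0 hv⟩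
end

section
/- Let Γ be a geometric distance-regular graph with respect to a set 𝒞 of Delsarte cliques. Then ψ₁ ≤ τ₂ ≤ −θ_min, and consequently ψ₁² ≤ c₂ ≤ θ_min². -/
open SimpleGraph Finset Matrix

/-!
Count the common neighbours `w` of two vertices `x, y` at distance `2` by the clique of `𝒞`
through the edge `xw`: these cliques are exactly the `τ₂` cliques through `x` meeting the
neighbourhood of `y`, and the common neighbours in each of them are its `ψ₁` neighbours of `y`,
so `c₂ = τ₂ ψ₁`. Since two cliques of `𝒞` share at most one vertex, the `ψ₁` neighbours of `x`
in a clique through `y` lie in pairwise different cliques through `x`, all counted by `τ₂`;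
hence `ψ₁ ≤ τ₂`, while `τ₂ ≤ m` because all counted cliques contain `x`.
-/

namespace SimpleGraph

variable {V : Type*} {G : SimpleGraph V}

theorem dist_eq_two_iff {u v : V} :
    G.dist u v = 2 ↔ u ≠ v ∧ ¬ G.Adj u v ∧ (G.commonNeighbors u v).Nonempty := by
  rw [dist, ENat.toNat_eq_iff two_ne_zero, Nat.cast_ofNat, edist_eq_two_iff]

variable {𝒞 : Set (Finset V)}

theorem eq_of_mem_of_mem_of_edge_cliques (hclique : ∀ C ∈ 𝒞, G.IsClique (C : Set V))
    (hedge : ∀ x y : V, G.Adj x y → ∃! C, C ∈ 𝒞 ∧ x ∈ C ∧ y ∈ C)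
    {C D : Finset V} (hC : C ∈ 𝒞) (hD : D ∈ 𝒞) {u w : V} (huw : u ≠ w)
    (huC : u ∈ C) (hwC : w ∈ C) (huD : u ∈ D) (hwD : w ∈ D) : C = D :=
  (hedge u w (hclique C hC huC hwC huw)).unique ⟨hC, huC, hwC⟩ ⟨hD, huD, hwD⟩

variable [DecidableEq V]

theorem card_inter_le_one_of_edge_cliques
    (hclique : ∀ C ∈ 𝒞, G.IsClique (C : Set V))
    (hedge : ∀ x y : V, G.Adj x y → ∃! C, C ∈ 𝒞 ∧ x ∈ C ∧ y ∈ C)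
    {C D : Finset V} (hC : C ∈ 𝒞) (hD : D ∈ 𝒞) (hCD : C ≠ D) : (C ∩ D).card ≤ 1 := by
  refine Finset.card_le_one.2 fun u hu w hw => ?_
  by_contra huw
  rw [Finset.mem_inter] at hu hw
  exact hCD (eq_of_mem_of_mem_of_edge_cliques hclique hedge hC hD huw hu.1 hw.1 hu.2 hw.2)

variable [DecidableRel G.Adj]

theorem card_filter_adj_le_of_edge_cliques
    (hclique : ∀ C ∈ 𝒞, G.IsClique (C : Set V))
    (hedge : ∀ x y : V, G.Adj x y → ∃! C, C ∈ 𝒞 ∧ x ∈ C ∧ y ∈ C)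
    {x y : V} (hxy : ¬ G.Adj x y) {T : Finset (Finset V)}
    (hT : ∀ C, C ∈ T ↔ C ∈ 𝒞 ∧ x ∈ C ∧ ∃ z ∈ C, G.Adj y z)
    {C₀ : Finset V} (hC₀ : C₀ ∈ 𝒞) (hyC₀ : y ∈ C₀) (hxC₀ : x ∉ C₀) :
    (C₀.filter (G.Adj x)).card ≤ T.card := by
  have hcover : C₀.filter (G.Adj x) ⊆ T.biUnion (· ∩ C₀) := by
    intro w hw
    rw [Finset.mem_filter] at hw
    obtain ⟨C, ⟨hC, hxC, hwC⟩, -⟩ := hedge x w hw.2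
    have hyw : G.Adj y w := hclique C₀ hC₀ hyC₀ hw.1 (by rintro rfl; exact hxy hw.2)
    exact Finset.mem_biUnion.2 ⟨C, (hT C).2 ⟨hC, hxC, w, hwC, hyw⟩, Finset.mem_inter.2 ⟨hwC, hw.1⟩⟩
  calc (C₀.filter (G.Adj x)).card
      ≤ ∑ C ∈ T, (C ∩ C₀).card := (Finset.card_le_card hcover).trans Finset.card_biUnion_le
    _ ≤ ∑ _C ∈ T, 1 := Finset.sum_le_sum fun C hC => by
        obtain ⟨hC, hxC, -⟩ := (hT C).1 hC
        exact card_inter_le_one_of_edge_cliques hclique hedge hC hC₀ (by rintro rfl; exact hxC₀ hxC)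
    _ = T.card := by rw [Finset.card_eq_sum_ones]

variable [Fintype V]

theorem card_neighborFinset_inter_eq_sum_of_edge_cliques
    (hclique : ∀ C ∈ 𝒞, G.IsClique (C : Set V))
    (hedge : ∀ x y : V, G.Adj x y → ∃! C, C ∈ 𝒞 ∧ x ∈ C ∧ y ∈ C)
    {x y : V} (hxy : ¬ G.Adj x y) {T : Finset (Finset V)}
    (hT : ∀ C, C ∈ T ↔ C ∈ 𝒞 ∧ x ∈ C ∧ ∃ z ∈ C, G.Adj y z) :
    (G.neighborFinset x ∩ G.neighborFinset y).card = ∑ C ∈ T, (C.filter (G.Adj y)).card := by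
  have hne : ∀ w, G.Adj y w → w ≠ x := by
    rintro w hyw rfl
    exact hxy hyw.symm
  have hcover : G.neighborFinset x ∩ G.neighborFinset y = T.biUnion (·.filter (G.Adj y)) := by
    ext w
    simp only [Finset.mem_inter, mem_neighborFinset, Finset.mem_biUnion, Finset.mem_filter, hT]
    constructor
    · rintro ⟨hxw, hyw⟩
      obtain ⟨C, ⟨hC, hxC, hwC⟩, -⟩ := hedge x w hxw
      exact ⟨C, ⟨hC, hxC, w, hwC, hyw⟩, hwC, hyw⟩
    · rintro ⟨C, ⟨hC, hxC, -⟩, hwC, hyw⟩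
      exact ⟨hclique C hC hxC hwC (hne w hyw).symm, hyw⟩
  rw [hcover, Finset.card_biUnion]
  intro C hC D hD hCD
  refine Finset.disjoint_left.2 fun w hwC hwD => hCD ?_
  rw [Finset.mem_filter] at hwC hwD
  rw [Finset.mem_coe, hT] at hC hD
  exact eq_of_mem_of_mem_of_edge_cliques hclique hedge hC.1 hD.1 (hne w hwC.2).symm
    hC.2.1 hwC.1 hD.2.1 hwD.1

end SimpleGraph

theorem psi_tau_bounds_general {V : Type*} [Fintype V] [DecidableEq V]
    (G : SimpleGraph V) [DecidableRel G.Adj] (m ψ₁ τ₂ c₂ : ℕ)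
    (𝒞 : Set (Finset V))
    -- 𝒞 is a set of Delsarte cliques: cliques of size 1 − k/θ_min = 1 + k/m
    (hclique : ∀ C ∈ 𝒞, G.IsClique (C : Set V))
    -- geometric: every edge lies in a unique clique of 𝒞
    (hedge : ∀ x y : V, G.Adj x y → ∃! C, C ∈ 𝒞 ∧ x ∈ C ∧ y ∈ C)
    -- every vertex lies in exactly m = −θ_min cliques of 𝒞
    (hvert : ∀ x : V, {C ∈ 𝒞 | x ∈ C}.ncard = m)
    -- there exist vertices at distance 2
    (hD : ∃ x y : V, G.dist x y = 2)
    -- ψ₁: number of neighbors in a clique of 𝒞 of a vertex at distance 1 from it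
    (hψ : ∀ C ∈ 𝒞, ∀ x : V, x ∉ C → (∃ z ∈ C, G.Adj x z) →
      (C.filter (fun z => G.Adj x z)).card = ψ₁)
    -- τ₂: number of cliques of 𝒞 through x at distance 1 from y, when d(x,y) = 2
    (hτ : ∀ x y : V, G.dist x y = 2 →
      {C | C ∈ 𝒞 ∧ x ∈ C ∧ ∃ z ∈ C, G.Adj y z}.ncard = τ₂)
    -- c₂: number of common neighbors of vertices at distance 2
    (hc : ∀ x y : V, G.dist x y = 2 →
      ((G.neighborFinset x) ∩ (G.neighborFinset y)).card = c₂) :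
    ψ₁ ≤ τ₂ ∧ τ₂ ≤ m ∧ ψ₁ ^ 2 ≤ c₂ ∧ c₂ ≤ m ^ 2 := by
  obtain ⟨x, y, hd⟩ := hD
  obtain ⟨hxy, hnadj, z, hz⟩ := dist_eq_two_iff.1 hd
  rw [mem_commonNeighbors] at hz
  set T := (Set.toFinite {C | C ∈ 𝒞 ∧ x ∈ C ∧ ∃ z ∈ C, G.Adj y z}).toFinset
  have hT : ∀ C, C ∈ T ↔ C ∈ 𝒞 ∧ x ∈ C ∧ ∃ z ∈ C, G.Adj y z := fun C => Set.Finite.mem_toFinset _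
  have hτT : T.card = τ₂ := by rw [← hτ x y hd, Set.ncard_eq_toFinset_card]
  have hτm : τ₂ ≤ m := by
    rw [← hτ x y hd, ← hvert x]
    exact Set.ncard_le_ncard (fun C hC => ⟨hC.1, hC.2.1⟩) (Set.toFinite _)
  have hc₂ : c₂ = τ₂ * ψ₁ := by
    rw [← hc x y hd, card_neighborFinset_inter_eq_sum_of_edge_cliques hclique hedge hnadj hT,
      ← hτT, ← smul_eq_mul, ← Finset.sum_const]
    refine Finset.sum_congr rfl fun C hC => ?_
    obtain ⟨hC, hxC, hyC⟩ := (hT C).1 hC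
    exact hψ C hC y (fun hyC => hnadj (hclique C hC hxC hyC hxy)) hyC
  have hψτ : ψ₁ ≤ τ₂ := by
    obtain ⟨C₀, ⟨hC₀, hyC₀, hzC₀⟩, -⟩ := hedge y z hz.2
    have hxC₀ : x ∉ C₀ := fun hxC₀ => hnadj (hclique C₀ hC₀ hxC₀ hyC₀ hxy)
    rw [← hψ C₀ hC₀ x hxC₀ ⟨z, hzC₀, hz.1⟩, ← hτT]
    exact card_filter_adj_le_of_edge_cliques hclique hedge hnadj hT hC₀ hyC₀ hxC₀
  refine ⟨hψτ, hτm, ?_, ?_⟩ <;> rw [hc₂, sq]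
  · exact Nat.mul_le_mul_right _ hψτ
  · exact Nat.mul_le_mul hτm (hψτ.trans hτm)

/-- For a geometric distance-regular graph with respect to a set `𝒞` of
Delsarte cliques (smallest eigenvalue `−m`), one has `ψ₁ ≤ τ₂ ≤ m = −θ_min` and
consequently `ψ₁² ≤ c₂ ≤ m² = θ_min²`. -/
theorem psi_tau_bounds {V : Type*} [Fintype V] [DecidableEq V]
    (G : SimpleGraph V) [DecidableRel G.Adj] (k m ψ₁ τ₂ c₂ : ℕ)
    (𝒞 : Set (Finset V))
    (hm : 0 < m)
    (hconn : G.Connected)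
    (hreg : G.IsRegularOfDegree k)
    -- smallest eigenvalue of G is −m
    (hθeig : ∃ v : V → ℝ, v ≠ 0 ∧ G.adjMatrix ℝ *ᵥ v = (-(m : ℝ)) • v)
    (hθmin : ∀ μ : ℝ, (∃ v : V → ℝ, v ≠ 0 ∧ G.adjMatrix ℝ *ᵥ v = μ • v) → -(m : ℝ) ≤ μ)
    -- 𝒞 is a set of Delsarte cliques: cliques of size 1 − k/θ_min = 1 + k/m
    (hclique : ∀ C ∈ 𝒞, G.IsClique (C : Set V))
    (hsize : ∀ C ∈ 𝒞, (C.card : ℝ) = 1 + (k : ℝ) / (m : ℝ))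
    -- geometric: every edge lies in a unique clique of 𝒞
    (hedge : ∀ x y : V, G.Adj x y → ∃! C, C ∈ 𝒞 ∧ x ∈ C ∧ y ∈ C)
    -- every vertex lies in exactly m = −θ_min cliques of 𝒞
    (hvert : ∀ x : V, {C ∈ 𝒞 | x ∈ C}.ncard = m)
    -- there exist vertices at distance 2
    (hD : ∃ x y : V, G.dist x y = 2)
    -- ψ₁: number of neighbors in a clique of 𝒞 of a vertex at distance 1 from it
    (hψ : ∀ C ∈ 𝒞, ∀ x : V, x ∉ C → (∃ z ∈ C, G.Adj x z) →
      (C.filter (fun z => G.Adj x z)).card = ψ₁)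
    -- τ₂: number of cliques of 𝒞 through x at distance 1 from y, when d(x,y) = 2
    (hτ : ∀ x y : V, G.dist x y = 2 →
      {C | C ∈ 𝒞 ∧ x ∈ C ∧ ∃ z ∈ C, G.Adj y z}.ncard = τ₂)
    -- c₂: number of common neighbors of vertices at distance 2
    (hc : ∀ x y : V, G.dist x y = 2 →
      ((G.neighborFinset x) ∩ (G.neighborFinset y)).card = c₂) :
    ψ₁ ≤ τ₂ ∧ τ₂ ≤ m ∧ ψ₁ ^ 2 ≤ c₂ ∧ c₂ ≤ m ^ 2 :=
  psi_tau_bounds_general G m ψ₁ τ₂ c₂ 𝒞 hclique hedge hvert hD hψ hτ hc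
end

section
/- Let Γ be a geometric distance-regular graph with smallest eigenvalue −3, valency k ≥ 6, diameter D = 2, c₂ = 9. Then Γ has intersection numbers (c₁,a₁,b₁) = (1, a₁, 2a₁−10) and (c₂,a₂,b₂) = (9, 3a₁−18, 0); in particular k = 3a₁ − 9. -/
open SimpleGraph Finset Matrix

/-- `G` is distance-regular with intersection numbers `b i`, `c i`. -/
def IsDRG {V : Type*} [Fintype V] [DecidableEq V] (G : SimpleGraph V)
    [DecidableRel G.Adj] (b c : ℕ → ℕ) : Prop :=
  G.Connected ∧
  ∀ x y : V,
    ((G.neighborFinset y).filter (fun z => G.dist x z = G.dist x y - 1)).card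
        = c (G.dist x y) ∧
    ((G.neighborFinset y).filter (fun z => G.dist x z = G.dist x y + 1)).card
        = b (G.dist x y)

/-- A geometric distance-regular graph with smallest eigenvalue `−3`,
valency `k ≥ 6`, diameter `2` and `c₂ = 9` has intersection numbers
`(c₁,a₁,b₁) = (1, a₁, 2a₁−10)` and `(c₂,a₂,b₂) = (9, 3a₁−18, 0)`;
in particular `k = 3a₁ − 9`. -/
theorem geometric_c2_eq_nine {V : Type*} [Fintype V] [DecidableEq V]
    (G : SimpleGraph V) [DecidableRel G.Adj] (k a₁ : ℕ) (b c : ℕ → ℕ)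
    (𝒞 : Set (Finset V))
    (hdrg : IsDRG G b c)
    (hreg : G.IsRegularOfDegree k)
    (hk : 6 ≤ k)
    (ha : ∀ x y : V, G.Adj x y →
      ((G.neighborFinset x) ∩ (G.neighborFinset y)).card = a₁)
    -- smallest eigenvalue of G is −3
    (hθeig : ∃ v : V → ℝ, v ≠ 0 ∧ G.adjMatrix ℝ *ᵥ v = (-3 : ℝ) • v)
    (hθmin : ∀ μ : ℝ, (∃ v : V → ℝ, v ≠ 0 ∧ G.adjMatrix ℝ *ᵥ v = μ • v) → (-3 : ℝ) ≤ μ)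
    -- geometric with respect to the set 𝒞 of Delsarte cliques (of size 1 + k/3)
    (hclique : ∀ C ∈ 𝒞, G.IsClique (C : Set V))
    (hsize : ∀ C ∈ 𝒞, 3 * C.card = k + 3)
    (hedge : ∀ x y : V, G.Adj x y → ∃! C, C ∈ 𝒞 ∧ x ∈ C ∧ y ∈ C)
    (hvert : ∀ x : V, {C ∈ 𝒞 | x ∈ C}.ncard = 3)
    -- diameter 2
    (hdiam : ∀ x y : V, G.dist x y ≤ 2) (hD2 : ∃ x y : V, G.dist x y = 2)
    -- c₂ = 9
    (hc₂ : c 2 = 9) :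
    c 1 = 1 ∧ (b 1 : ℤ) = 2 * (a₁ : ℤ) - 10 ∧ c 2 = 9 ∧ b 2 = 0 ∧
    ((k : ℤ) - (b 2 : ℤ) - (c 2 : ℤ) = 3 * (a₁ : ℤ) - 18) ∧
    (k : ℤ) = 3 * (a₁ : ℤ) - 9 := by
  obtain ⟨hconn, hint⟩ := hdrg
  obtain ⟨x₀, y₀, hxy₀⟩ := hD2
  -- distance facts
  have hdist2 : ∀ x z : V, x ≠ z → ¬ G.Adj x z → G.dist x z = 2 := by
    intro x z hne hadj
    have h0 : G.dist x z ≠ 0 := Nat.pos_iff_ne_zero.mp (hconn.pos_dist_of_ne hne)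
    have h1 : G.dist x z ≠ 1 := fun h => hadj ((SimpleGraph.dist_eq_one_iff_adj (G := G)).mp h)
    have h2 := hdiam x z
    omega
  -- common neighbours of non-adjacent distinct vertices
  have hmu : ∀ x z : V, x ≠ z → ¬ G.Adj x z →
      ((G.neighborFinset x) ∩ (G.neighborFinset z)).card = 9 := by
    intro x z hne hadj
    have h2 := hdist2 x z hne hadj
    have h := (hint x z).1
    rw [h2, hc₂] at h
    rw [← h]
    congr 1
    ext w
    simp only [mem_filter, mem_inter, mem_neighborFinset]
    rw [show (2 - 1 : ℕ) = 1 from rfl, SimpleGraph.dist_eq_one_iff_adj (G := G)]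
    tauto
  -- an edge
  have hx₀y₀ : x₀ ≠ y₀ := by
    intro h; rw [h] at hxy₀; simp [SimpleGraph.dist_self] at hxy₀
  have hNne : (G.neighborFinset x₀).Nonempty := by
    have hdeg : (G.neighborFinset x₀).card = k := hreg x₀
    rw [← Finset.card_pos, hdeg]; omega
  obtain ⟨y₁, hy₁⟩ := hNne
  have hadj₁ : G.Adj x₀ y₁ := by rwa [mem_neighborFinset] at hy₁
  have hd₁ : G.dist x₀ y₁ = 1 := (SimpleGraph.dist_eq_one_iff_adj (G := G)).mpr hadj₁
  -- c 1 = 1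
  have hc₁ : c 1 = 1 := by
    have h := (hint x₀ y₁).1
    rw [hd₁] at h
    rw [← h]
    have : ((G.neighborFinset y₁).filter (fun z => G.dist x₀ z = 1 - 1)) = {x₀} := by
      ext z
      simp only [mem_filter, mem_neighborFinset, Finset.mem_singleton]
      constructor
      · rintro ⟨_, h2⟩
        exact ((hconn.dist_eq_zero_iff).mp h2).symm
      · rintro rfl
        exact ⟨hadj₁.symm, (hconn.dist_eq_zero_iff).mpr rfl⟩
    rw [this, Finset.card_singleton]
  -- k = 1 + a₁ + b 1
  have hb₁ : k = 1 + a₁ + b 1 := by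
    set N := G.neighborFinset y₁ with hN
    have hcard : N.card = k := hreg y₁
    have h1 : (N.filter (fun z => G.dist x₀ z = 0)).card = 1 := by
      have h := (hint x₀ y₁).1
      rw [hd₁, hc₁] at h
      exact h
    have h2 : (N.filter (fun z => G.dist x₀ z = 1)).card = a₁ := by
      rw [← ha x₀ y₁ hadj₁]
      congr 1
      ext z
      simp only [mem_filter, mem_inter, mem_neighborFinset, hN]
      constructor
      · rintro ⟨hzy, hz⟩
        exact ⟨(SimpleGraph.dist_eq_one_iff_adj (G := G)).mp hz, hzy⟩
      · rintro ⟨hz, hzy⟩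
        exact ⟨hzy, (SimpleGraph.dist_eq_one_iff_adj (G := G)).mpr hz⟩
    have h3 : (N.filter (fun z => G.dist x₀ z = 2)).card = b 1 := by
      have h := (hint x₀ y₁).2
      rw [hd₁] at h
      exact h
    have hsplit1 : (N.filter (fun z => G.dist x₀ z = 0)).card
        + (N.filter (fun z => ¬ G.dist x₀ z = 0)).card = N.card :=
      Finset.card_filter_add_card_filter_not _
    have hsplit2 : ((N.filter (fun z => ¬ G.dist x₀ z = 0)).filter
          (fun z => G.dist x₀ z = 1)).card
        + ((N.filter (fun z => ¬ G.dist x₀ z = 0)).filter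
          (fun z => ¬ G.dist x₀ z = 1)).card
        = (N.filter (fun z => ¬ G.dist x₀ z = 0)).card :=
      Finset.card_filter_add_card_filter_not _
    have e1 : (N.filter (fun z => ¬ G.dist x₀ z = 0)).filter (fun z => G.dist x₀ z = 1)
        = N.filter (fun z => G.dist x₀ z = 1) := by
      rw [Finset.filter_filter]
      apply Finset.filter_congr
      intro z _
      omega
    have e2 : (N.filter (fun z => ¬ G.dist x₀ z = 0)).filter (fun z => ¬ G.dist x₀ z = 1)
        = N.filter (fun z => G.dist x₀ z = 2) := by
      rw [Finset.filter_filter]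
      apply Finset.filter_congr
      intro z _
      have := hdiam x₀ z
      omega
    rw [e1, e2, h2, h3] at hsplit2
    rw [h1, ← hsplit2, hcard] at hsplit1
    omega
  -- b 2 = 0
  have hb₂ : b 2 = 0 := by
    have h := (hint x₀ y₀).2
    rw [hxy₀] at h
    rw [← h]
    rw [Finset.card_eq_zero]
    apply Finset.filter_false_of_mem
    intro z _
    have := hdiam x₀ z
    omega
  -- eigenvalue computation : k = 3 a₁ - 9
  obtain ⟨v, hv0, hAv⟩ := hθeig
  have hApp : ∀ x : V, ∑ y ∈ G.neighborFinset x, v y = -3 * v x := by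
    intro x
    have h := congrFun hAv x
    rw [SimpleGraph.adjMatrix_mulVec_apply] at h
    simpa using h
  have hNsum : ∀ x : V, ∑ y ∈ G.neighborFinset x, v y
      = ∑ y : V, (if G.Adj x y then v y else 0) := by
    intro x
    rw [SimpleGraph.neighborFinset_eq_filter, Finset.sum_filter]
  have hS : ∑ z : V, v z = 0 := by
    have h1 : ∑ x : V, ∑ y ∈ G.neighborFinset x, v y = (k : ℝ) * ∑ z : V, v z := by
      calc ∑ x : V, ∑ y ∈ G.neighborFinset x, v y
          = ∑ x : V, ∑ y : V, (if G.Adj x y then v y else 0) := by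
            exact Finset.sum_congr rfl fun x _ => hNsum x
        _ = ∑ y : V, ∑ x : V, (if G.Adj x y then v y else 0) := Finset.sum_comm
        _ = ∑ y : V, (k : ℝ) * v y := by
            refine Finset.sum_congr rfl fun y _ => ?_
            rw [← Finset.sum_filter, Finset.sum_const, nsmul_eq_mul]
            have hfil : (Finset.univ.filter (fun x => G.Adj x y)) = G.neighborFinset y := by
              ext w
              simp [SimpleGraph.mem_neighborFinset, adj_comm]
            have hdeg : (G.neighborFinset y).card = k := hreg y
            rw [hfil, hdeg]
        _ = (k : ℝ) * ∑ z : V, v z := by rw [Finset.mul_sum]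
    have h2 : ∑ x : V, ∑ y ∈ G.neighborFinset x, v y = -3 * ∑ z : V, v z := by
      rw [Finset.sum_congr rfl fun x _ => hApp x, ← Finset.mul_sum]
    have h3 : ((k : ℝ) + 3) * ∑ z : V, v z = 0 := by
      rw [add_mul]; rw [h1] at h2; linarith
    have hk3 : ((k : ℝ) + 3) ≠ 0 := by positivity
    exact (mul_eq_zero.mp h3).resolve_left hk3
  obtain ⟨x, hx⟩ := Function.ne_iff.mp hv0
  have hx : v x ≠ 0 := hx
  have hT : ∑ y ∈ G.neighborFinset x, ∑ z ∈ G.neighborFinset y, v z = 9 * v x := by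
    rw [Finset.sum_congr rfl fun y _ => hApp y, ← Finset.mul_sum, hApp x]
    ring
  have hT2 : ∑ y ∈ G.neighborFinset x, ∑ z ∈ G.neighborFinset y, v z
      = ∑ z : V, ((G.neighborFinset x ∩ G.neighborFinset z).card : ℝ) * v z := by
    calc ∑ y ∈ G.neighborFinset x, ∑ z ∈ G.neighborFinset y, v z
        = ∑ y ∈ G.neighborFinset x, ∑ z : V, (if G.Adj y z then v z else 0) := by
          exact Finset.sum_congr rfl fun y _ => hNsum y
      _ = ∑ z : V, ∑ y ∈ G.neighborFinset x, (if G.Adj y z then v z else 0) :=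
          Finset.sum_comm
      _ = ∑ z : V, ((G.neighborFinset x ∩ G.neighborFinset z).card : ℝ) * v z := by
          refine Finset.sum_congr rfl fun z _ => ?_
          rw [← Finset.sum_filter, Finset.sum_const, nsmul_eq_mul]
          have hfil : ((G.neighborFinset x).filter (fun y => G.Adj y z))
              = G.neighborFinset x ∩ G.neighborFinset z := by
            ext y
            simp only [mem_filter, mem_inter, mem_neighborFinset]
            exact ⟨fun ⟨h1, h2⟩ => ⟨h1, h2.symm⟩, fun ⟨h1, h2⟩ => ⟨h1, h2.symm⟩⟩
          rw [hfil]
  have hdecomp : ∀ z : V, ((G.neighborFinset x ∩ G.neighborFinset z).card : ℝ) * v z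
      = 9 * v z + (if z = x then ((k : ℝ) - 9) * v z else 0)
        + (if G.Adj x z then ((a₁ : ℝ) - 9) * v z else 0) := by
    intro z
    by_cases hzx : z = x
    · rw [if_pos hzx, if_neg (by rw [hzx]; exact G.irrefl), hzx, Finset.inter_self]
      have hdeg : (G.neighborFinset x).card = k := hreg x
      rw [hdeg]
      ring
    · by_cases hadj : G.Adj x z
      · rw [if_neg hzx, if_pos hadj, ha x z hadj]
        ring
      · rw [if_neg hzx, if_neg hadj, hmu x z (fun h => hzx h.symm) hadj]
        norm_num
  have hkey : (9 : ℝ) * v x = ((k : ℝ) - 9) * v x + ((a₁ : ℝ) - 9) * (-3 * v x) := by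
    have h := hT2
    rw [hT] at h
    rw [Finset.sum_congr rfl fun z _ => hdecomp z] at h
    rw [Finset.sum_add_distrib, Finset.sum_add_distrib, ← Finset.mul_sum, hS,
      Finset.sum_ite_eq' Finset.univ x] at h
    have hif : ∑ z : V, (if G.Adj x z then ((a₁ : ℝ) - 9) * v z else 0)
        = ((a₁ : ℝ) - 9) * (-3 * v x) := by
      rw [← Finset.sum_filter, ← SimpleGraph.neighborFinset_eq_filter, ← Finset.mul_sum,
        hApp x]
    rw [hif, if_pos (Finset.mem_univ x)] at h
    rw [h]; ring
  have hkr : (k : ℝ) = 3 * (a₁ : ℝ) - 9 := by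
    have h : ((k : ℝ) - 3 * (a₁ : ℝ) + 9) * v x = 0 := by linarith [hkey]
    have h2 := (mul_eq_zero.mp h).resolve_right hx
    linarith
  have hkn : k + 9 = 3 * a₁ := by exact_mod_cast (by linarith [hkr] : (k : ℝ) + 9 = 3 * (a₁ : ℝ))
  refine ⟨hc₁, ?_, hc₂, hb₂, ?_, ?_⟩
  · have : (k : ℤ) = 1 + a₁ + b 1 := by exact_mod_cast hb₁
    have : (k : ℤ) + 9 = 3 * a₁ := by exact_mod_cast hkn
    omega
  · rw [hb₂, hc₂]
    have : (k : ℤ) + 9 = 3 * a₁ := by exact_mod_cast hkn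
    omega
  · have : (k : ℤ) + 9 = 3 * a₁ := by exact_mod_cast hkn
    omega
end

section
/- Let Γ be a connected k-regular graph in which every vertex's neighborhood is a disjoint union of three cliques of size a₁+1 (so k = 3(a₁+1)), and suppose each edge lies in a unique maximal clique of size a₁+2. If Γ has diameter 2 and c₂ = 2 (every pair at distance 2 has exactly 2 common neighbors), then the smallest eigenvalue of Γ is strictly greater than −3. -/
open SimpleGraph Finset Matrix

private lemma common_nbrs_eq_erase {V : Type*} [Fintype V] [DecidableEq V]
    (G : SimpleGraph V) [DecidableRel G.Adj] (x y : V) (A B C : Finset V)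
    (hN : G.neighborFinset x = A ∪ B ∪ C)
    (hA : G.IsClique (A : Set V))
    (hAB : ∀ u ∈ A, ∀ v ∈ B, ¬ G.Adj u v)
    (hAC : ∀ u ∈ A, ∀ v ∈ C, ¬ G.Adj u v)
    (hy : y ∈ A) :
    G.neighborFinset x ∩ G.neighborFinset y = A.erase y := by
  ext z
  simp only [mem_inter, mem_neighborFinset, mem_erase]
  constructor
  · rintro ⟨hxz, hyz⟩
    have hz : z ∈ A ∪ B ∪ C := by
      rw [← hN]; exact (mem_neighborFinset G x z).2 hxz
    rcases mem_union.1 hz with hz' | hzC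
    · rcases mem_union.1 hz' with hzA | hzB
      · exact ⟨fun h => G.irrefl (h ▸ hyz), hzA⟩
      · exact absurd hyz (hAB y hy z hzB)
    · exact absurd hyz (hAC y hy z hzC)
  · rintro ⟨hne, hzA⟩
    have hxz : G.Adj x z := by
      rw [← mem_neighborFinset, hN]
      exact mem_union_left _ (mem_union_left _ hzA)
    exact ⟨hxz, hA (Finset.mem_coe.2 hy) (Finset.mem_coe.2 hzA) (Ne.symm hne)⟩

/-- Let `G` be a connected graph in which the neighborhood of every
vertex is a disjoint union of three cliques of size `a₁+1` (so `G` is regular of valency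
`k = 3(a₁+1)`), such that each edge lies in a unique maximal clique of size `a₁+2`. If `G`
has diameter `2` and every pair of vertices at distance `2` has exactly `2` common
neighbors, then every eigenvalue of `G` is strictly greater than `−3`. -/
theorem local_three_cliques_diam_two_eigenvalue {V : Type*} [Fintype V] [DecidableEq V]
    (G : SimpleGraph V) [DecidableRel G.Adj] (a₁ : ℕ)
    (hconn : G.Connected)
    (hreg : G.IsRegularOfDegree (3 * (a₁ + 1)))
    -- every neighborhood is a disjoint union of three cliques of size a₁+1
    (hlocal : ∀ x : V, ∃ A B C : Finset V,
      G.neighborFinset x = A ∪ B ∪ C ∧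
      Disjoint A B ∧ Disjoint A C ∧ Disjoint B C ∧
      A.card = a₁ + 1 ∧ B.card = a₁ + 1 ∧ C.card = a₁ + 1 ∧
      G.IsClique (A : Set V) ∧ G.IsClique (B : Set V) ∧ G.IsClique (C : Set V) ∧
      (∀ u ∈ A, ∀ v ∈ B, ¬ G.Adj u v) ∧ (∀ u ∈ A, ∀ v ∈ C, ¬ G.Adj u v) ∧
      (∀ u ∈ B, ∀ v ∈ C, ¬ G.Adj u v))
    -- each edge lies in a unique maximal clique of size a₁+2
    (hedge : ∀ x y : V, G.Adj x y → ∃! s : Finset V,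
      (G.IsClique (s : Set V) ∧ s.card = a₁ + 2 ∧
        (∀ t : Finset V, G.IsClique (t : Set V) → s ⊆ t → s = t)) ∧ x ∈ s ∧ y ∈ s)
    -- diameter 2
    (hdiam : ∀ x y : V, G.dist x y ≤ 2) (hD2 : ∃ x y : V, G.dist x y = 2)
    -- c₂ = 2
    (hc₂ : ∀ x y : V, G.dist x y = 2 →
      ((G.neighborFinset x) ∩ (G.neighborFinset y)).card = 2) :
    ∀ μ : ℝ, (∃ v : V → ℝ, v ≠ 0 ∧ G.adjMatrix ℝ *ᵥ v = μ • v) → (-3 : ℝ) < μ := by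
  -- λ = a₁ : adjacent vertices have exactly a₁ common neighbours
  have hlam : ∀ x y : V, G.Adj x y →
      (G.neighborFinset x ∩ G.neighborFinset y).card = a₁ := by
    intro x y hxy
    obtain ⟨A, B, C, hN, _, _, _, hcA, hcB, hcC, hA, hB, hC, hAB, hAC, hBC⟩ := hlocal x
    have hy : y ∈ A ∪ B ∪ C := by
      rw [← hN]; exact (mem_neighborFinset G x y).2 hxy
    rcases mem_union.1 hy with hy' | hyC
    · rcases mem_union.1 hy' with hyA | hyB
      · rw [common_nbrs_eq_erase G x y A B C hN hA hAB hAC hyA,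
          card_erase_of_mem hyA, hcA]
        omega
      · rw [common_nbrs_eq_erase G x y B A C
          (by rw [hN]; ext u; simp only [mem_union]; tauto) hB
          (fun u hu v hv h => hAB v hv u hu h.symm) hBC hyB,
          card_erase_of_mem hyB, hcB]
        omega
    · rw [common_nbrs_eq_erase G x y C A B
        (by rw [hN]; ext u; simp only [mem_union]; tauto) hC
        (fun u hu v hv h => hAC v hv u hu h.symm)
        (fun u hu v hv h => hBC v hv u hu h.symm) hyC,
        card_erase_of_mem hyC, hcC]
      omega
  -- μ = 2 : distinct non-adjacent vertices have exactly 2 common neighbours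
  have hmu : ∀ x y : V, x ≠ y → ¬ G.Adj x y →
      (G.neighborFinset x ∩ G.neighborFinset y).card = 2 := by
    intro x y hne hnadj
    apply hc₂
    have h0 : G.dist x y ≠ 0 := by
      intro h
      exact hne (((hconn x y).dist_eq_zero_iff).1 h)
    have h1 : G.dist x y ≠ 1 := fun h => hnadj (dist_eq_one_iff_adj.1 h)
    have h2 := hdiam x y
    omega
  -- the matrix identity  A² = (3a₁+1)·I + (a₁-2)·A + 2·J
  have hM : G.adjMatrix ℝ * G.adjMatrix ℝ =
      (3 * (a₁ : ℝ) + 1) • (1 : Matrix V V ℝ) + ((a₁ : ℝ) - 2) • G.adjMatrix ℝ +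
        (2 : ℝ) • Matrix.of (fun _ _ => (1 : ℝ)) := by
    ext x z
    have hcnt : (G.adjMatrix ℝ * G.adjMatrix ℝ) x z =
        ((G.neighborFinset x ∩ G.neighborFinset z).card : ℝ) := by
      rw [adjMatrix_mul_apply]
      have hinter : G.neighborFinset x ∩ G.neighborFinset z =
          (G.neighborFinset x).filter (fun u => G.Adj u z) := by
        ext u
        simp only [mem_inter, mem_neighborFinset, mem_filter]
        exact ⟨fun ⟨h1, h2⟩ => ⟨h1, h2.symm⟩, fun ⟨h1, h2⟩ => ⟨h1, h2.symm⟩⟩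
      rw [hinter]
      simp [Finset.sum_ite, Finset.sum_filter]
    by_cases hxz : x = z
    · subst hxz
      have : G.neighborFinset x ∩ G.neighborFinset x = G.neighborFinset x := by simp
      have hdeg : (G.neighborFinset x).card = 3 * (a₁ + 1) := hreg x
      rw [hcnt, this, hdeg]
      simp only [Matrix.add_apply, Matrix.smul_apply, Matrix.one_apply_eq, Matrix.of_apply,
        smul_eq_mul, adjMatrix_apply, if_neg (G.irrefl (v := x)), mul_zero, mul_one]
      push_cast
      ring
    · by_cases hadj : G.Adj x z
      · rw [hcnt, hlam x z hadj]
        simp [Matrix.add_apply, Matrix.smul_apply, Matrix.one_apply_ne hxz, hadj]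
      · rw [hcnt, hmu x z hxz hadj]
        simp [Matrix.add_apply, Matrix.smul_apply, Matrix.one_apply_ne hxz, hadj]
  rintro μ ⟨v, hv0, hv⟩
  set S : ℝ := ∑ i, v i with hS
  -- row sums:  μ·S = k·S
  have hrow : μ * S = (3 * (a₁ : ℝ) + 3) * S := by
    have h1 : (fun _ => (1 : ℝ)) ⬝ᵥ (G.adjMatrix ℝ *ᵥ v) =
        ((fun _ => (1 : ℝ)) ᵥ* G.adjMatrix ℝ) ⬝ᵥ v := (dotProduct_mulVec _ _ _)
    have hL : (fun _ => (1 : ℝ)) ⬝ᵥ (G.adjMatrix ℝ *ᵥ v) = μ * S := by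
      rw [hv]
      simp [dotProduct, Finset.mul_sum, hS]
    have hR : ((fun _ => (1 : ℝ)) ᵥ* G.adjMatrix ℝ) ⬝ᵥ v = (3 * (a₁ : ℝ) + 3) * S := by
      simp only [dotProduct, adjMatrix_vecMul_apply]
      have : ∀ x : V, (∑ _u ∈ G.neighborFinset x, (1 : ℝ)) = (3 * (a₁ : ℝ) + 3) := by
        intro x
        have hdeg : (G.neighborFinset x).card = 3 * (a₁ + 1) := hreg x
        rw [Finset.sum_const, hdeg, nsmul_eq_mul, mul_one]
        push_cast; ring
      rw [Finset.sum_congr rfl fun x _ => by rw [this x]]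
      rw [hS, Finset.mul_sum]
    rw [← hL, h1, hR]
  -- pointwise consequence of the matrix identity
  have hpt : ∀ x : V, μ ^ 2 * v x =
      (3 * (a₁ : ℝ) + 1) * v x + ((a₁ : ℝ) - 2) * (μ * v x) + 2 * S := by
    intro x
    have h2 : (G.adjMatrix ℝ * G.adjMatrix ℝ) *ᵥ v = (μ ^ 2) • v := by
      rw [← mulVec_mulVec, hv, mulVec_smul, hv, smul_smul, sq]
    rw [hM] at h2
    have := congrFun h2 x
    simp only [add_mulVec, smul_mulVec, one_mulVec, Pi.add_apply, Pi.smul_apply,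
      smul_eq_mul] at this
    have hJ : ((Matrix.of (fun _ _ => (1 : ℝ))) *ᵥ v) x = S := by
      simp [mulVec, dotProduct, hS]
    rw [hJ] at this
    have hAv : (G.adjMatrix ℝ *ᵥ v) x = μ * v x := by rw [hv]; simp
    rw [hAv] at this
    linarith [this]
  by_cases hmuk : μ = 3 * (a₁ : ℝ) + 3
  · rw [hmuk]
    have : (0 : ℝ) ≤ (a₁ : ℝ) := Nat.cast_nonneg _
    linarith
  · have hS0 : S = 0 := by
      rcases mul_eq_zero.1 (show (μ - (3 * (a₁ : ℝ) + 3)) * S = 0 by linarith [hrow]) with h | h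
      · exact absurd (by linarith : μ = 3 * (a₁ : ℝ) + 3) hmuk
      · exact h
    obtain ⟨x, hx⟩ := Function.ne_iff.1 hv0
    have hxne : v x ≠ 0 := hx
    have heq : μ ^ 2 = (3 * (a₁ : ℝ) + 1) + ((a₁ : ℝ) - 2) * μ := by
      have := hpt x
      rw [hS0] at this
      have h' : (μ ^ 2) * v x = ((3 * (a₁ : ℝ) + 1) + ((a₁ : ℝ) - 2) * μ) * v x := by
        ring_nf
        ring_nf at this
        linarith
      exact mul_right_cancel₀ hxne h'
    by_contra hcon
    push_neg at hcon
    have ha : (0 : ℝ) ≤ (a₁ : ℝ) := Nat.cast_nonneg _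
    nlinarith [mul_nonneg (show (0 : ℝ) ≤ -(μ + 3) by linarith)
      (show (0 : ℝ) ≤ (a₁ : ℝ) + 1 - μ by linarith)]
end
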